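/- arXiv:0804.2535 — 4 statements merged into one kernel-verified Lean document; each statement's English description precedes it below -/
import Mathlib

section
/- The full simply-typed lambda-calculus λ(→,∧,∨,⊥) is strongly normalizing with respect to the union of β-reductions and commutative reductions. -/
/-! Types of the full simply-typed lambda-calculus λ(→,∧,∨,⊥). -/
inductive Ty : Type
  | base : ℕ → Ty
  | bot  : Ty
  | arr  : Ty → Ty → Ty
  | and  : Ty → Ty → Ty
  | or   : Ty → Ty → Ty
  deriving DecidableEq

/-- Church-style terms of λ(→,∧,∨,⊥), de Bruijn indices for variables. -/
inductive Tm : Type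
  | var   : ℕ → Tm
  | lam   : Ty → Tm → Tm
  | app   : Tm → Tm → Tm
  | pair  : Tm → Tm → Tm
  | inl   : Ty → Ty → Tm → Tm            -- (in₁ A)^(σ∨τ)
  | inr   : Ty → Ty → Tm → Tm
  | proj1 : Tm → Ty → Ty → Tm            -- P^(σ∧τ) π₁
  | proj2 : Tm → Ty → Ty → Tm
  | case  : Tm → Ty → Ty → Tm → Tm → Ty → Tm  -- W^(σ∨τ)[x.S,y.T]^δ
  | eps   : Tm → Ty → Tm                 -- A^⊥ ε_σ
  deriving DecidableEq

namespace Tm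

/-- Shift the free variables `≥ c` of a term by `d`. -/
def shift (c d : ℕ) : Tm → Tm
  | var n => if n < c then var n else var (n + d)
  | lam σ t => lam σ (shift (c + 1) d t)
  | app s t => app (shift c d s) (shift c d t)
  | pair s t => pair (shift c d s) (shift c d t)
  | inl σ τ t => inl σ τ (shift c d t)
  | inr σ τ t => inr σ τ (shift c d t)
  | proj1 t σ τ => proj1 (shift c d t) σ τ
  | proj2 t σ τ => proj2 (shift c d t) σ τ
  | case w σ τ s t δ => case (shift c d w) σ τ (shift (c + 1) d s) (shift (c + 1) d t) δ
  | eps t σ => eps (shift c d t) σ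

/-- Capture-avoiding substitution of `s` for variable `n`. -/
def subst : Tm → ℕ → Tm → Tm
  | var m, n, s => if m = n then s else if n < m then var (m - 1) else var m
  | lam σ t, n, s => lam σ (subst t (n + 1) (shift 0 1 s))
  | app a b, n, s => app (subst a n s) (subst b n s)
  | pair a b, n, s => pair (subst a n s) (subst b n s)
  | inl σ τ t, n, s => inl σ τ (subst t n s)
  | inr σ τ t, n, s => inr σ τ (subst t n s)
  | proj1 t σ τ, n, s => proj1 (subst t n s) σ τ
  | proj2 t σ τ, n, s => proj2 (subst t n s) σ τ
  | case w σ τ a b δ, n, s =>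
      case (subst w n s) σ τ (subst a (n + 1) (shift 0 1 s)) (subst b (n + 1) (shift 0 1 s)) δ
  | eps t σ, n, s => eps (subst t n s) σ

end Tm

/-- Typing judgment of λ(→,∧,∨,⊥). -/
inductive HasTy : List Ty → Tm → Ty → Prop
  | var {Γ n τ} : Γ[n]? = some τ → HasTy Γ (.var n) τ
  | lam {Γ σ τ t} : HasTy (σ :: Γ) t τ → HasTy Γ (.lam σ t) (.arr σ τ)
  | app {Γ σ τ s t} : HasTy Γ s (.arr σ τ) → HasTy Γ t σ → HasTy Γ (.app s t) τ
  | pair {Γ σ τ s t} : HasTy Γ s σ → HasTy Γ t τ → HasTy Γ (.pair s t) (.and σ τ)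
  | inl {Γ σ τ t} : HasTy Γ t σ → HasTy Γ (.inl σ τ t) (.or σ τ)
  | inr {Γ σ τ t} : HasTy Γ t τ → HasTy Γ (.inr σ τ t) (.or σ τ)
  | proj1 {Γ σ τ t} : HasTy Γ t (.and σ τ) → HasTy Γ (.proj1 t σ τ) σ
  | proj2 {Γ σ τ t} : HasTy Γ t (.and σ τ) → HasTy Γ (.proj2 t σ τ) τ
  | case {Γ σ τ δ w s t} : HasTy Γ w (.or σ τ) → HasTy (σ :: Γ) s δ → HasTy (τ :: Γ) t δ →
      HasTy Γ (.case w σ τ s t δ) δ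
  | eps {Γ σ t} : HasTy Γ t .bot → HasTy Γ (.eps t σ) σ

/-- Compatible (congruence) closure of a root relation on terms. -/
inductive Compat (R : Tm → Tm → Prop) : Tm → Tm → Prop
  | root {a b} : R a b → Compat R a b
  | lam {σ a b} : Compat R a b → Compat R (.lam σ a) (.lam σ b)
  | appL {a b t} : Compat R a b → Compat R (.app a t) (.app b t)
  | appR {a b t} : Compat R a b → Compat R (.app t a) (.app t b)
  | pairL {a b t} : Compat R a b → Compat R (.pair a t) (.pair b t)
  | pairR {a b t} : Compat R a b → Compat R (.pair t a) (.pair t b)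
  | inl {σ τ a b} : Compat R a b → Compat R (.inl σ τ a) (.inl σ τ b)
  | inr {σ τ a b} : Compat R a b → Compat R (.inr σ τ a) (.inr σ τ b)
  | proj1 {σ τ a b} : Compat R a b → Compat R (.proj1 a σ τ) (.proj1 b σ τ)
  | proj2 {σ τ a b} : Compat R a b → Compat R (.proj2 a σ τ) (.proj2 b σ τ)
  | caseW {σ τ δ a b s t} : Compat R a b → Compat R (.case a σ τ s t δ) (.case b σ τ s t δ)
  | caseS {σ τ δ w a b t} : Compat R a b → Compat R (.case w σ τ a t δ) (.case w σ τ b t δ)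
  | caseT {σ τ δ w s a b} : Compat R a b → Compat R (.case w σ τ s a δ) (.case w σ τ s b δ)
  | eps {σ a b} : Compat R a b → Compat R (.eps a σ) (.eps b σ)

/-- Root β-reductions of λ(→,∧,∨,⊥). -/
inductive BetaRoot : Tm → Tm → Prop
  | beta {σ m a} : BetaRoot (.app (.lam σ m) a) (m.subst 0 a)
  | pi1 {m n σ τ} : BetaRoot (.proj1 (.pair m n) σ τ) m
  | pi2 {m n σ τ} : BetaRoot (.proj2 (.pair m n) σ τ) n
  | inl {σ τ δ a s t} : BetaRoot (.case (.inl σ τ a) σ τ s t δ) (s.subst 0 a)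
  | inr {σ τ δ b s t} : BetaRoot (.case (.inr σ τ b) σ τ s t δ) (t.subst 0 b)

/-- Root commutative (permutative) reductions of λ(→,∧,∨,⊥). -/
inductive CommRoot : Tm → Tm → Prop
  | epsApp {a σ τ n} : CommRoot (.app (.eps a (.arr σ τ)) n) (.eps a τ)
  | epsPi1 {a σ τ} : CommRoot (.proj1 (.eps a (.and σ τ)) σ τ) (.eps a σ)
  | epsPi2 {a σ τ} : CommRoot (.proj2 (.eps a (.and σ τ)) σ τ) (.eps a τ)
  | epsCase {a σ τ δ s t} : CommRoot (.case (.eps a (.or σ τ)) σ τ s t δ) (.eps a δ)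
  | epsEps {a σ} : CommRoot (.eps (.eps a .bot) σ) (.eps a σ)
  | caseApp {w σ τ α β s t n} :
      CommRoot (.app (.case w σ τ s t (.arr α β)) n)
        (.case w σ τ (.app s (n.shift 0 1)) (.app t (n.shift 0 1)) β)
  | casePi1 {w σ τ α β s t} :
      CommRoot (.proj1 (.case w σ τ s t (.and α β)) α β)
        (.case w σ τ (.proj1 s α β) (.proj1 t α β) α)
  | casePi2 {w σ τ α β s t} :
      CommRoot (.proj2 (.case w σ τ s t (.and α β)) α β)
        (.case w σ τ (.proj2 s α β) (.proj2 t α β) β)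
  | caseCase {w σ τ α β δ s t a b} :
      CommRoot (.case (.case w σ τ s t (.or α β)) α β a b δ)
        (.case w σ τ (.case s α β (a.shift 1 1) (b.shift 1 1) δ)
          (.case t α β (a.shift 1 1) (b.shift 1 1) δ) δ)
  | caseEps {w σ τ s t α} :
      CommRoot (.eps (.case w σ τ s t .bot) α)
        (.case w σ τ (.eps s α) (.eps t α) α)

/-- One step of β-reduction anywhere in a term. -/
def Beta : Tm → Tm → Prop := Compat BetaRoot

/-- One step of commutative (permutative) reduction anywhere in a term. -/
def Comm : Tm → Tm → Prop := Compat CommRoot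

/-! ## The target calculus λ→ -/

/-- Types of λ→: a single base type ⊥ and function types. -/
inductive Ty1 : Type
  | bot : Ty1
  | arr : Ty1 → Ty1 → Ty1
  deriving DecidableEq

/-- (Curry-style) terms of λ→, de Bruijn indices. -/
inductive Tm1 : Type
  | var : ℕ → Tm1
  | lam : Tm1 → Tm1
  | app : Tm1 → Tm1 → Tm1
  deriving DecidableEq

namespace Tm1

def shift (c d : ℕ) : Tm1 → Tm1
  | var n => if n < c then var n else var (n + d)
  | lam t => lam (shift (c + 1) d t)
  | app s t => app (shift c d s) (shift c d t)

def subst : Tm1 → ℕ → Tm1 → Tm1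
  | var m, n, s => if m = n then s else if n < m then var (m - 1) else var m
  | lam t, n, s => lam (subst t (n + 1) (shift 0 1 s))
  | app a b, n, s => app (subst a n s) (subst b n s)

end Tm1

/-- Typing in λ→. -/
inductive HasTy1 : List Ty1 → Tm1 → Ty1 → Prop
  | var {Γ n τ} : Γ[n]? = some τ → HasTy1 Γ (.var n) τ
  | lam {Γ σ τ t} : HasTy1 (σ :: Γ) t τ → HasTy1 Γ (.lam t) (.arr σ τ)
  | app {Γ σ τ s t} : HasTy1 Γ s (.arr σ τ) → HasTy1 Γ t σ → HasTy1 Γ (.app s t) τ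

/-- One step of βη-reduction in λ→. -/
inductive Step1 : Tm1 → Tm1 → Prop
  | beta {t s} : Step1 (.app (.lam t) s) (t.subst 0 s)
  | eta {t} : Step1 (.lam (.app (t.shift 0 1) (.var 0))) t
  | lam {a b} : Step1 a b → Step1 (.lam a) (.lam b)
  | appL {a b t} : Step1 a b → Step1 (.app a t) (.app b t)
  | appR {a b t} : Step1 a b → Step1 (.app t a) (.app t b)

/-- One step of η-reduction in λ→. -/
inductive EtaStep : Tm1 → Tm1 → Prop
  | eta {t} : EtaStep (.lam (.app (t.shift 0 1) (.var 0))) t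
  | lam {a b} : EtaStep a b → EtaStep (.lam a) (.lam b)
  | appL {a b t} : EtaStep a b → EtaStep (.app a t) (.app b t)
  | appR {a b t} : EtaStep a b → EtaStep (.app t a) (.app t b)

/-! ## The translation -/

/-- Translation of types: all type constants (including ⊥) go to ⊥. -/
def trTy : Ty → Ty1
  | .base _ => .bot
  | .bot => .bot
  | .arr σ τ => .arr (trTy σ) (trTy τ)
  | .and σ τ => .arr (.arr (trTy σ) (.arr (trTy τ) .bot)) .bot
  | .or σ τ => .arr (.arr (trTy σ) .bot) (.arr (.arr (trTy τ) .bot) .bot)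

/-- The argument list of a λ→ type: `args (σ₁→…→σₙ→⊥) = [σ₁,…,σₙ]`. -/
def args : Ty1 → List Ty1
  | .bot => []
  | .arr a b => a :: args b

/-- `absN n t = λx₁…xₙ. t`. -/
def absN : ℕ → Tm1 → Tm1
  | 0, t => t
  | n + 1, t => .lam (absN n t)

/-- Iterated application. -/
def mkApps : Tm1 → List Tm1 → Tm1 := List.foldl .app

/-- The translation of terms of λ(→,∧,∨,⊥) into λ→. -/
def trTm : Tm → Tm1
  | .var n => .var n
  | .lam _ t => .lam (trTm t)
  | .app s t => .app (trTm s) (trTm t)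
  | .pair s t => .lam (.app (.app (.var 0) ((trTm s).shift 0 1)) ((trTm t).shift 0 1))
  | .inl _ _ t => .lam (.lam (.app (.var 1) ((trTm t).shift 0 2)))
  | .inr _ _ t => .lam (.lam (.app (.var 0) ((trTm t).shift 0 2)))
  | .proj1 p σ _ =>
      let n := (args (trTy σ)).length
      absN n (.app ((trTm p).shift 0 n)
        (.lam (.lam (mkApps (.var 1) ((List.range n).map fun i => .var (n + 1 - i))))))
  | .proj2 p _ τ =>
      let m := (args (trTy τ)).length
      absN m (.app ((trTm p).shift 0 m)
        (.lam (.lam (mkApps (.var 0) ((List.range m).map fun i => .var (m + 1 - i))))))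
  | .case w _ _ s t δ =>
      let k := (args (trTy δ)).length
      absN k (.app (.app ((trTm w).shift 0 k)
          (.lam (mkApps ((trTm s).shift 1 k) ((List.range k).map fun i => .var (k - i)))))
        (.lam (mkApps ((trTm t).shift 1 k) ((List.range k).map fun i => .var (k - i)))))
  | .eps a σ =>
      let n := (args (trTy σ)).length
      absN (n - 1) ((trTm a).shift 0 (n - 1))

/-!
Strong normalization is proved directly by reducibility, without the translation into λ→. A term
is viewed as `plug t E`, a head `t` under a stack `E` of elimination frames; a commutative
conversion never touches the head, it merges two adjacent frames of the stack into one.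
Reducibility is defined by biorthogonality: each type `ρ` has a set of reducible stacks, and a
term is reducible at `ρ` when it is strongly normalizing in every reducible `ρ`-stack. At atomic
types and `⊥` the reducible stacks are the strongly normalizing ones, and at `σ ∨ τ` those that
moreover normalize every injection of a reducible term. Reducibility of `ε`- and `case`-terms
then comes down to facts about stacks, and the remaining work is head expansion: `plug t E` is
strongly normalizing when the contractum of the redex `t` is, also for a `case` on an injection,
which may commute with the frames after it.
-/

open Relation Function

/-! ## Shifting and substitution -/

namespace Tm

@[simp] theorem shift_zero (t : Tm) (c : ℕ) : shift c 0 t = t := by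
  induction t generalizing c <;> simp [shift, *]

theorem shift_shift_comm (t : Tm) (d d' : ℕ) {c c' : ℕ} (h : c' ≤ c) :
    shift (c + d') d (shift c' d' t) = shift c' d' (shift c d t) := by
  induction t generalizing c c' with
  | var n => grind [shift]
  | _ => simp_all [shift, Nat.add_right_comm _ d' 1]

theorem subst_shift_cancel (t s : Tm) (d : ℕ) {c j : ℕ} (h₁ : c ≤ j) (h₂ : j < c + d) :
    subst (shift c d t) j s = shift c (d - 1) t := by
  induction t generalizing c j s with
  | var n => grind [shift, subst]
  | _ => simp_all [shift, subst, Nat.add_right_comm _ 1]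

@[simp] theorem subst_shift_self (t s : Tm) (c : ℕ) : subst (shift c 1 t) c s = t := by
  simp [subst_shift_cancel]

theorem subst_shift_shift (t u : Tm) (d : ℕ) {c j : ℕ} (h : c ≤ j) :
    subst (shift c d t) (j + d) (shift c d u) = shift c d (subst t j u) := by
  induction t generalizing c j u with
  | var n => grind [shift, subst]
  | _ => simp_all [shift, subst, Nat.add_right_comm _ d 1,
      fun c => (shift_shift_comm u d 1 (Nat.zero_le c)).symm]

theorem shift_subst (t u : Tm) (d : ℕ) {c j : ℕ} (h : j ≤ c) :
    shift c d (subst t j u) = subst (shift (c + 1) d t) j (shift c d u) := by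
  induction t generalizing c j u with
  | var n => grind [shift, subst]
  | _ => simp_all [shift, subst, shift_shift_comm]

theorem subst_subst (t u s : Tm) {i j : ℕ} (h : i ≤ j) :
    subst (subst t i u) j s = subst (subst t (j + 1) (shift i 1 s)) i (subst u j s) := by
  induction t generalizing i j u s with
  | var n => grind [shift, subst, subst_shift_cancel, shift_zero]
  | _ => simp_all [subst, shift_shift_comm, subst_shift_shift]

def scons (a : Tm) (e : ℕ → Tm) : ℕ → Tm
  | 0 => a
  | n + 1 => e n

def up (e : ℕ → Tm) : ℕ → Tm := scons (.var 0) fun n => (e n).shift 0 1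

def msubst : Tm → (ℕ → Tm) → Tm
  | .var n, e => e n
  | .lam σ t, e => .lam σ (msubst t (up e))
  | .app a b, e => .app (msubst a e) (msubst b e)
  | .pair a b, e => .pair (msubst a e) (msubst b e)
  | .inl σ τ t, e => .inl σ τ (msubst t e)
  | .inr σ τ t, e => .inr σ τ (msubst t e)
  | .proj1 t σ τ, e => .proj1 (msubst t e) σ τ
  | .proj2 t σ τ, e => .proj2 (msubst t e) σ τ
  | .case w σ τ s t δ, e => .case (msubst w e) σ τ (msubst s (up e)) (msubst t (up e)) δ
  | .eps t σ, e => .eps (msubst t e) σ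

theorem up_var : up .var = .var := by
  funext n
  cases n <;> simp [up, scons, shift]

@[simp] theorem msubst_var (t : Tm) : msubst t .var = t := by
  induction t <;> simp_all [msubst, up_var]

theorem up_subst (e : ℕ → Tm) (k : ℕ) (s : Tm) :
    (fun n => (up e n).subst (k + 1) (s.shift 0 1)) = up fun n => (e n).subst k s := by
  funext n
  cases n <;> simp [up, scons, subst, subst_shift_shift]

theorem msubst_subst (t : Tm) (e : ℕ → Tm) (k : ℕ) (s : Tm) :
    (msubst t e).subst k s = msubst t fun n => (e n).subst k s := by
  induction t generalizing e k s <;> simp_all [msubst, subst, up_subst]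

theorem msubst_up_subst_zero (t : Tm) (e : ℕ → Tm) (a : Tm) :
    (msubst t (up e)).subst 0 a = msubst t (scons a e) := by
  rw [msubst_subst]
  congr 1
  funext n
  cases n <;> simp [up, scons, subst]

end Tm

/-! ## Reduction -/

namespace Compat

variable {R : Tm → Tm → Prop}

theorem mono {S : Tm → Tm → Prop} (h : ∀ {a b}, R a b → S a b) {a b : Tm}
    (hab : Compat R a b) : Compat S a b := by
  induction hab with
  | root hr => exact .root (h hr)
  | _ => aesop (add 50% constructors Compat)

theorem shift (hR : ∀ {a b}, R a b → ∀ c d, R (a.shift c d) (b.shift c d)) {a b : Tm}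
    (h : Compat R a b) (c d : ℕ) : Compat R (a.shift c d) (b.shift c d) := by
  induction h generalizing c with
  | root hr => exact .root (hR hr c d)
  | _ => simp only [Tm.shift]; aesop (add 50% constructors Compat)

theorem subst (hR : ∀ {a b}, R a b → ∀ n s, R (a.subst n s) (b.subst n s)) {a b : Tm}
    (h : Compat R a b) (n : ℕ) (s : Tm) : Compat R (a.subst n s) (b.subst n s) := by
  induction h generalizing n s with
  | root hr => exact .root (hR hr n s)
  | _ => simp only [Tm.subst]; aesop (add 50% constructors Compat)

end Compat

theorem compat_or_iff {R S : Tm → Tm → Prop} {a b : Tm} :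
    Compat (fun a b => R a b ∨ S a b) a b ↔ Compat R a b ∨ Compat S a b := by
  refine ⟨fun h => ?_, fun h => h.elim (Compat.mono .inl) (Compat.mono .inr)⟩
  induction h with
  | root hr => exact hr.imp .root .root
  | _ ih => rcases ih with ih | ih <;> aesop (add 50% constructors Compat)

def Root (a b : Tm) : Prop := BetaRoot a b ∨ CommRoot a b

abbrev Step : Tm → Tm → Prop := Compat Root

theorem step_iff_beta_or_comm {a b : Tm} : Step a b ↔ Beta a b ∨ Comm a b := compat_or_iff

theorem Root.shift {a b : Tm} (h : Root a b) (c d : ℕ) : Root (a.shift c d) (b.shift c d) := by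
  rcases h with h | h <;> cases h <;>
    simp only [Tm.shift, Tm.shift_subst _ _ _ (Nat.zero_le _),
      Tm.shift_shift_comm _ _ _ (Nat.zero_le _),
      Tm.shift_shift_comm _ _ _ (Nat.le_add_left 1 _)] <;>
    first | exact .inl (by constructor) | exact .inr (by constructor)

theorem Root.subst {a b : Tm} (h : Root a b) (n : ℕ) (s : Tm) :
    Root (a.subst n s) (b.subst n s) := by
  rcases h with h | h <;> cases h <;>
    simp only [Tm.subst, Tm.subst_subst _ _ _ (Nat.zero_le _), ← Tm.shift_shift_comm s 1 1 le_rfl,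
      Nat.zero_add, Tm.subst_shift_shift, Nat.zero_le, Nat.le_add_left] <;>
    first | exact .inl (by constructor) | exact .inr (by constructor)

theorem Step.shift {a b : Tm} (h : Step a b) (c d : ℕ) : Step (a.shift c d) (b.shift c d) :=
  Compat.shift Root.shift h c d

theorem Step.subst {a b : Tm} (h : Step a b) (n : ℕ) (s : Tm) :
    Step (a.subst n s) (b.subst n s) :=
  Compat.subst Root.subst h n s

theorem Step.reflTransGen_map (f : Tm → Tm) (hf : ∀ {a b}, Step a b → Step (f a) (f b))
    {a b : Tm} (h : ReflTransGen Step a b) : ReflTransGen Step (f a) (f b) :=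
  ReflTransGen.lift f (fun _ _ => hf) a b h

theorem Step.subst_arg (t : Tm) {s s' : Tm} (h : Step s s') (n : ℕ) :
    ReflTransGen Step (t.subst n s) (t.subst n s') := by
  induction t generalizing n s s' with
  | var m =>
    simp only [Tm.subst]
    split_ifs
    exacts [.single h, .refl, .refl]
  | lam σ t ih => exact reflTransGen_map _ .lam (ih (h.shift 0 1) _)
  | app a b iha ihb =>
    exact (reflTransGen_map (.app · _) .appL (iha h n)).trans
      (reflTransGen_map _ .appR (ihb h n))
  | pair a b iha ihb =>
    exact (reflTransGen_map (.pair · _) .pairL (iha h n)).trans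
      (reflTransGen_map _ .pairR (ihb h n))
  | inl σ τ a ih => exact reflTransGen_map _ .inl (ih h n)
  | inr σ τ a ih => exact reflTransGen_map _ .inr (ih h n)
  | proj1 a σ τ ih => exact reflTransGen_map (.proj1 · σ τ) .proj1 (ih h n)
  | proj2 a σ τ ih => exact reflTransGen_map (.proj2 · σ τ) .proj2 (ih h n)
  | case w σ τ a b δ ihw iha ihb =>
    exact (reflTransGen_map (.case · σ τ _ _ δ) .caseW (ihw h n)).trans <|
      (reflTransGen_map (.case _ σ τ · _ δ) .caseS (iha (h.shift 0 1) _)).trans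
      (reflTransGen_map _ .caseT (ihb (h.shift 0 1) _))
  | eps a σ ih => exact reflTransGen_map (.eps · σ) .eps (ih h n)

theorem Step.reflTransGen_subst_arg (t : Tm) {s s' : Tm} (h : ReflTransGen Step s s')
    (n : ℕ) :
    ReflTransGen Step (t.subst n s) (t.subst n s') :=
  ReflTransGen.lift' (t.subst n) (fun _ _ h => Step.subst_arg t h n) s s' h

theorem Step.reflTransGen_pair {a a' b b' : Tm} (ha : ReflTransGen Step a a')
    (hb : ReflTransGen Step b b') : ReflTransGen Step (.pair a b) (.pair a' b') :=
  (reflTransGen_map (.pair · b) .pairL ha).trans (reflTransGen_map _ .pairR hb)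

theorem Step.transGen_pair_left {a a' b b' : Tm} (ha : Step a a')
    (hb : ReflTransGen Step b b') : TransGen Step (.pair a b) (.pair a' b') :=
  .head' (.pairL ha) (reflTransGen_map _ .pairR hb)

theorem Step.transGen_pair_right {a a' b b' : Tm} (ha : ReflTransGen Step a a')
    (hb : Step b b') : TransGen Step (.pair a b) (.pair a' b') :=
  .tail' (reflTransGen_map (.pair · b) .pairL ha) (.pairR hb)

theorem Step.var_inv {n : ℕ} {u : Tm} (h : Step (.var n) u) : False := by
  cases h with
  | root hr => rcases hr with h | h <;> cases h

theorem Step.lam_inv {σ : Ty} {a u : Tm} (h : Step (.lam σ a) u) :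
    ∃ a', Step a a' ∧ u = .lam σ a' := by
  cases h with
  | root hr => rcases hr with h | h <;> cases h
  | lam h => exact ⟨_, h, rfl⟩

theorem Step.inl_inv {σ τ : Ty} {a u : Tm} (h : Step (.inl σ τ a) u) :
    ∃ a', Step a a' ∧ u = .inl σ τ a' := by
  cases h with
  | root hr => rcases hr with h | h <;> cases h
  | inl h => exact ⟨_, h, rfl⟩

theorem Step.inr_inv {σ τ : Ty} {a u : Tm} (h : Step (.inr σ τ a) u) :
    ∃ a', Step a a' ∧ u = .inr σ τ a' := by
  cases h with
  | root hr => rcases hr with h | h <;> cases h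
  | inr h => exact ⟨_, h, rfl⟩

theorem Step.pair_inv {a b u : Tm} (h : Step (.pair a b) u) :
    (∃ a', Step a a' ∧ u = .pair a' b) ∨ (∃ b', Step b b' ∧ u = .pair a b') := by
  cases h with
  | root hr => rcases hr with h | h <;> cases h
  | pairL h => exact .inl ⟨_, h, rfl⟩
  | pairR h => exact .inr ⟨_, h, rfl⟩

def SN (t : Tm) : Prop := Acc (swap Step) t

namespace SN

theorem of_map {f : Tm → Tm} (hf : ∀ {a b}, Step a b → Step (f a) (f b)) {t : Tm}
    (h : SN (f t)) : SN t :=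
  Subrelation.accessible hf (InvImage.accessible f h)

theorem map_of_step_inv {C : Tm → Tm}
    (hC : ∀ {a u}, Step (C a) u → ∃ a', Step a a' ∧ u = C a') {a : Tm} (h : SN a) :
    SN (C a) := by
  induction h with
  | intro a _ ih =>
    refine ⟨_, fun u hu => ?_⟩
    obtain ⟨a', ha', rfl⟩ := hC hu
    exact ih a' ha'

theorem var (n : ℕ) : SN (.var n) := ⟨_, fun _ h => h.var_inv.elim⟩

theorem lam {σ : Ty} {a : Tm} : SN a → SN (.lam σ a) := map_of_step_inv Step.lam_inv

theorem inl {σ τ : Ty} {a : Tm} : SN a → SN (.inl σ τ a) := map_of_step_inv Step.inl_inv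

theorem inr {σ τ : Ty} {a : Tm} : SN a → SN (.inr σ τ a) := map_of_step_inv Step.inr_inv

theorem pair {a b : Tm} (ha : SN a) (hb : SN b) : SN (.pair a b) := by
  induction ha generalizing b with
  | intro a _ iha =>
    induction hb with
    | intro b hb ihb =>
      refine ⟨_, fun u hu => ?_⟩
      rcases hu.pair_inv with ⟨a', ha', rfl⟩ | ⟨b', hb', rfl⟩
      · exact iha a' ha' ⟨b, hb⟩
      · exact ihb b' hb'

theorem of_subst {t s : Tm} {n : ℕ} (h : SN (t.subst n s)) : SN t :=
  of_map (fun h => Step.subst h n s) h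

theorem acc_transGen {t : Tm} (h : SN t) : Acc (swap (TransGen Step)) t :=
  Subrelation.accessible transGen_swap.mpr h.transGen

theorem of_acc_transGen {t : Tm} (h : Acc (swap (TransGen Step)) t) : SN t :=
  Subrelation.accessible (r := swap (TransGen Step)) (fun h => (.single h : TransGen Step _ _))
    h

theorem of_pair_left {a b : Tm} (h : SN (.pair a b)) : SN a := of_map .pairL h

theorem of_pair_right {a b : Tm} (h : SN (.pair a b)) : SN b := of_map .pairR h

end SN

/-! ## Stacks of elimination frames -/

inductive Frame : Type
  | app (u : Tm)
  | proj1 (σ τ : Ty)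
  | proj2 (σ τ : Ty)
  | case (σ τ : Ty) (s t : Tm) (δ : Ty)
  | eps (σ : Ty)

namespace Frame

def fill : Frame → Tm → Tm
  | app u, t => .app t u
  | proj1 σ τ, t => .proj1 t σ τ
  | proj2 σ τ, t => .proj2 t σ τ
  | case σ τ s b δ, t => .case t σ τ s b δ
  | eps σ, t => .eps t σ

def IsApplicative : Frame → Prop
  | app _ | proj1 _ _ | proj2 _ _ => True
  | case .. | eps _ => False

end Frame

inductive FrameStep : Frame → Frame → Prop
  | app {u u'} : Step u u' → FrameStep (.app u) (.app u')
  | caseL {σ τ s s' t δ} : Step s s' → FrameStep (.case σ τ s t δ) (.case σ τ s' t δ)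
  | caseR {σ τ s t t' δ} : Step t t' → FrameStep (.case σ τ s t δ) (.case σ τ s t' δ)

def plug (t : Tm) (E : List Frame) : Tm := E.foldl (fun t F => F.fill t) t

inductive StackStep : List Frame → List Frame → Prop
  | head {F F' E} : FrameStep F F' → StackStep (F :: E) (F' :: E)
  | tail {F E E'} : StackStep E E' → StackStep (F :: E) (F :: E')
  | comm {F₁ F₂ F E} : (∀ t, CommRoot (F₂.fill (F₁.fill t)) (F.fill t)) →
      StackStep (F₁ :: F₂ :: E) (F :: E)

theorem Step.fill {t t' : Tm} (h : Step t t') (F : Frame) : Step (F.fill t) (F.fill t') := by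
  cases F
  exacts [.appL h, .proj1 h, .proj2 h, .caseW h, .eps h]

theorem Step.plug {t t' : Tm} (h : Step t t') (E : List Frame) : Step (plug t E) (plug t' E) := by
  induction E generalizing t t' with
  | nil => exact h
  | cons F E ih => exact ih (h.fill F)

theorem Step.reflTransGen_plug {t t' : Tm} (h : ReflTransGen Step t t') (E : List Frame) :
    ReflTransGen Step (_root_.plug t E) (_root_.plug t' E) :=
  reflTransGen_map (_root_.plug · E) (·.plug E) h

theorem FrameStep.fill {F F' : Frame} (h : FrameStep F F') (t : Tm) :
    Step (F.fill t) (F'.fill t) := by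
  cases h
  exacts [.appR ‹_›, .caseS ‹_›, .caseT ‹_›]

theorem StackStep.plug {E E' : List Frame} (h : StackStep E E') (t : Tm) :
    Step (plug t E) (plug t E') := by
  induction h generalizing t with
  | head h => exact (h.fill t).plug _
  | tail _ ih => exact ih _
  | comm h => exact Step.plug (.root (.inr (h t))) _

theorem StackStep.length_le {E E' : List Frame} (h : StackStep E E') : E'.length ≤ E.length := by
  induction h <;> simp; omega

theorem step_fill_inv {F : Frame} {t u : Tm} (h : Step (F.fill t) u) :
    (∃ t', Step t t' ∧ u = F.fill t') ∨ (∃ F', FrameStep F F' ∧ u = F'.fill t) ∨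
      Root (F.fill t) u := by
  cases F <;> cases h <;>
    first
    | exact .inr (.inr ‹_›)
    | exact .inl ⟨_, ‹_›, rfl⟩
    | exact .inr (.inl ⟨_, .app ‹_›, rfl⟩)
    | exact .inr (.inl ⟨_, .caseL ‹_›, rfl⟩)
    | exact .inr (.inl ⟨_, .caseR ‹_›, rfl⟩)

theorem Root.fill_fill {F₁ F₂ : Frame} {t r : Tm} (h : Root (F₂.fill (F₁.fill t)) r) :
    ∃ F : Frame, r = F.fill t ∧ ∀ x, CommRoot (F₂.fill (F₁.fill x)) (F.fill x) := by
  cases F₁ <;> cases F₂ <;> rcases h with h | h <;> cases h <;>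
    first
    | exact ⟨.case _ _ _ _ _, rfl, fun _ => by constructor⟩
    | exact ⟨.eps _, rfl, fun _ => by constructor⟩

theorem step_plug_inv {t u : Tm} {E : List Frame} (h : Step (plug t E) u) :
    (∃ t', Step t t' ∧ u = plug t' E) ∨ (∃ E', StackStep E E' ∧ u = plug t E') ∨
      ∃ F E₁ r, E = F :: E₁ ∧ Root (F.fill t) r ∧ u = plug r E₁ := by
  induction E generalizing t with
  | nil => exact .inl ⟨u, h, rfl⟩
  | cons F E ih =>
    rcases ih h with ⟨v, hv, rfl⟩ | ⟨E', hE, rfl⟩ | ⟨F₂, E₂, r, rfl, hr, rfl⟩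
    · rcases step_fill_inv hv with ⟨t', ht, rfl⟩ | ⟨F', hF, rfl⟩ | hr
      · exact .inl ⟨t', ht, rfl⟩
      · exact .inr (.inl ⟨_, .head hF, rfl⟩)
      · exact .inr (.inr ⟨F, E, v, rfl, hr, rfl⟩)
    · exact .inr (.inl ⟨_, .tail hE, rfl⟩)
    · obtain ⟨F', rfl, hF'⟩ := hr.fill_fill
      exact .inr (.inl ⟨_, .comm hF', rfl⟩)

theorem step_plug_var_inv {n : ℕ} {E : List Frame} {u : Tm} (h : Step (plug (.var n) E) u) :
    ∃ E', StackStep E E' ∧ u = plug (.var n) E' := by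
  rcases step_plug_inv h with ⟨_, h, _⟩ | h | ⟨F, _, _, _, hr, _⟩
  · exact h.var_inv.elim
  · exact h
  · cases F <;> rcases hr with h | h <;> cases h

theorem StackStep.cons_inv_of_isApplicative {F : Frame} {E X : List Frame}
    (hF : F.IsApplicative) (h : StackStep (F :: E) X) :
    (∃ F', FrameStep F F' ∧ X = F' :: E) ∨ ∃ E', StackStep E E' ∧ X = F :: E' := by
  cases h with
  | head h => exact .inl ⟨_, h, rfl⟩
  | tail h => exact .inr ⟨_, h, rfl⟩
  | @comm _ F₂ _ _ h =>
    have := h (.var 0)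
    cases F <;> cases F₂ <;> first | exact hF.elim | cases this

theorem StackStep.eps_cons_inv {σ : Ty} {E X : List Frame} (h : StackStep (.eps σ :: E) X) :
    (∃ E', StackStep E E' ∧ X = .eps σ :: E') ∨
      ∃ F E₁ σ', E = F :: E₁ ∧ X = .eps σ' :: E₁ := by
  cases h with
  | head h => cases h
  | tail h => exact .inl ⟨_, h, rfl⟩
  | @comm _ F₂ F _ h =>
    have := h (.var 0)
    cases F₂ <;> cases F <;> cases this <;> exact .inr ⟨_, _, _, rfl, rfl⟩

theorem StackStep.case_cons_inv {σ τ δ : Ty} {s t : Tm} {E X : List Frame}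
    (h : StackStep (.case σ τ s t δ :: E) X) :
    (∃ s', Step s s' ∧ X = .case σ τ s' t δ :: E) ∨
    (∃ t', Step t t' ∧ X = .case σ τ s t' δ :: E) ∨
    (∃ E', StackStep E E' ∧ X = .case σ τ s t δ :: E') ∨
    ∃ F E₁ s' t' δ', E = F :: E₁ ∧ X = .case σ τ s' t' δ' :: E₁ ∧
      ∀ x, s'.subst 0 x = F.fill (s.subst 0 x) ∧ t'.subst 0 x = F.fill (t.subst 0 x) := by
  cases h with
  | head h =>
    cases h with
    | caseL h => exact .inl ⟨_, h, rfl⟩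
    | caseR h => exact .inr (.inl ⟨_, h, rfl⟩)
  | tail h => exact .inr (.inr (.inl ⟨_, h, rfl⟩))
  | @comm _ F₂ F _ h =>
    have := h (.var 0)
    cases F₂ <;> cases F <;> cases this <;>
      exact .inr (.inr (.inr
        ⟨_, _, _, _, _, rfl, rfl, fun x => by simp [Frame.fill, Tm.subst]⟩))

def SNStack (E : List Frame) : Prop := Acc (swap StackStep) E

theorem sn_plug_var_iff {n : ℕ} {E : List Frame} : SN (plug (.var n) E) ↔ SNStack E := by
  refine ⟨fun h => Subrelation.accessible (fun h => h.plug _) (InvImage.accessible _ h),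
    fun h => ?_⟩
  induction h with
  | intro E _ ih =>
    refine ⟨_, fun u hu => ?_⟩
    obtain ⟨E', hE', rfl⟩ := step_plug_var_inv hu
    exact ih E' hE'

theorem Frame.acc_app {u : Tm} (h : SN u) : Acc (swap FrameStep) (.app u) := by
  induction h with
  | intro u _ ih =>
    refine ⟨_, fun F hF => ?_⟩
    cases hF with
    | app h => exact ih _ h

theorem Frame.acc_proj1 {σ τ : Ty} : Acc (swap FrameStep) (.proj1 σ τ) :=
  ⟨_, fun _ h => by cases h⟩

theorem Frame.acc_proj2 {σ τ : Ty} : Acc (swap FrameStep) (.proj2 σ τ) :=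
  ⟨_, fun _ h => by cases h⟩

namespace SNStack

theorem nil : SNStack [] := ⟨_, fun _ h => by cases h⟩

theorem of_cons {F : Frame} {E : List Frame} (h : SNStack (F :: E)) : SNStack E :=
  Subrelation.accessible (fun h => .tail h) (InvImage.accessible (F :: ·) h)

theorem cons_of_isApplicative {F : Frame} {E : List Frame} (hF : F.IsApplicative)
    (hFa : Acc (swap FrameStep) F) (hE : SNStack E) : SNStack (F :: E) := by
  induction hFa generalizing E with
  | intro F _ ihF =>
    induction hE with
    | intro E hE ihE =>
      refine ⟨_, fun X hX => ?_⟩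
      rcases hX.cons_inv_of_isApplicative hF with ⟨F', hF', rfl⟩ | ⟨E', hE', rfl⟩
      · have hF'' : F'.IsApplicative := by cases hF' <;> trivial
        exact ihF F' hF' hF'' ⟨E, hE⟩
      · exact ihE E' hE'

theorem eps_cons {E : List Frame} (hE : SNStack E) (σ : Ty) : SNStack (.eps σ :: E) := by
  obtain ⟨k, hk⟩ : ∃ k, E.length ≤ k := ⟨_, le_rfl⟩
  induction k using Nat.strong_induction_on generalizing E σ with
  | _ k ihk =>
    induction hE generalizing σ with
    | intro E hE ihE =>
      refine ⟨_, fun X hX => ?_⟩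
      rcases hX.eps_cons_inv with ⟨E', hE', rfl⟩ | ⟨F, E₁, σ', rfl, rfl⟩
      · exact ihE E' hE' σ (hE'.length_le.trans hk)
      · exact ihk E₁.length (by simp at hk; omega) (of_cons ⟨_, hE⟩) σ' le_rfl

end SNStack

/-! ## Head expansion -/

/-- `c p` is the contractum of the redex `head p`, and `k p` the part of the redex that the
contraction may discard. The termination measure is the term `⟨plug (c p) E, k p⟩`, which is
strongly normalizing exactly when both components are. -/
theorem sn_plug_of_head {α : Type} (head c k : α → Tm)
    (hroot : ∀ p F r, ¬ Root (Frame.fill F (head p)) r)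
    (hstep : ∀ p u, Step (head p) u → u = c p ∨ ∃ q, u = head q ∧
      (Step (c p) (c q) ∧ ReflTransGen Step (k p) (k q) ∨
        ReflTransGen Step (c p) (c q) ∧ Step (k p) (k q)))
    {p : α} {E : List Frame} (hk : SN (k p)) (hc : SN (plug (c p) E)) :
    SN (plug (head p) E) := by
  suffices H : ∀ Q, Acc (swap (TransGen Step)) Q → ∀ p E, Q = .pair (plug (c p) E) (k p) →
      SN (plug (head p) E) from H _ (hc.pair hk).acc_transGen p E rfl
  intro Q hQ
  induction hQ with
  | intro Q hQ ih =>
  rintro p E rfl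
  refine ⟨_, fun X hX => ?_⟩
  rcases step_plug_inv hX with ⟨u, hu, rfl⟩ | ⟨E', hE', rfl⟩ | ⟨F, _, r, rfl, hr, _⟩
  · rcases hstep p u hu with rfl | ⟨q, rfl, ⟨hc, hk⟩ | ⟨hc, hk⟩⟩
    · exact (SN.of_acc_transGen ⟨_, hQ⟩).of_pair_left
    · exact ih _ ((hc.plug E).transGen_pair_left hk) q E rfl
    · exact ih _ (Step.transGen_pair_right (Step.reflTransGen_plug hc E) hk) q E rfl
  · exact ih _ (.single (.pairL (hE'.plug _))) p E' rfl
  · exact (hroot p F r hr).elim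

theorem sn_plug_beta {σ : Ty} {b a : Tm} {E : List Frame} (ha : SN a)
    (h : SN (plug (b.subst 0 a) E)) : SN (plug (.app (.lam σ b) a) E) := by
  refine sn_plug_of_head (fun p : Tm × Tm => .app (.lam σ p.1) p.2) (fun p => p.1.subst 0 p.2)
    Prod.snd (fun _ F _ h => by cases F <;> rcases h with h | h <;> cases h)
    (fun ⟨b, a⟩ u h => ?_) (p := (b, a)) ha h
  cases h with
  | root h => rcases h with h | h <;> cases h; exact .inl rfl
  | appL h =>
    obtain ⟨b', hb, rfl⟩ := Step.lam_inv h
    exact .inr ⟨(b', a), rfl, .inl ⟨hb.subst 0 a, .refl⟩⟩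
  | appR h => exact .inr ⟨(b, _), rfl, .inr ⟨Step.subst_arg b h 0, h⟩⟩

theorem sn_plug_proj1 {σ τ : Ty} {m n : Tm} {E : List Frame} (hn : SN n)
    (h : SN (plug m E)) : SN (plug (.proj1 (.pair m n) σ τ) E) := by
  refine sn_plug_of_head (fun p : Tm × Tm => .proj1 (.pair p.1 p.2) σ τ) Prod.fst Prod.snd
    (fun _ F _ h => by cases F <;> rcases h with h | h <;> cases h) (fun ⟨m, n⟩ u h => ?_)
    (p := (m, n)) hn h
  cases h with
  | root h => rcases h with h | h <;> cases h; exact .inl rfl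
  | proj1 h =>
    rcases Step.pair_inv h with ⟨m', hm, rfl⟩ | ⟨n', hn, rfl⟩
    · exact .inr ⟨(m', n), rfl, .inl ⟨hm, .refl⟩⟩
    · exact .inr ⟨(m, n'), rfl, .inr ⟨.refl, hn⟩⟩

theorem sn_plug_proj2 {σ τ : Ty} {m n : Tm} {E : List Frame} (hm : SN m)
    (h : SN (plug n E)) : SN (plug (.proj2 (.pair m n) σ τ) E) := by
  refine sn_plug_of_head (fun p : Tm × Tm => .proj2 (.pair p.2 p.1) σ τ) Prod.fst Prod.snd
    (fun _ F _ h => by cases F <;> rcases h with h | h <;> cases h) (fun ⟨n, m⟩ u h => ?_)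
    (p := (n, m)) hm h
  cases h with
  | root h => rcases h with h | h <;> cases h; exact .inl rfl
  | proj2 h =>
    rcases Step.pair_inv h with ⟨m', hm, rfl⟩ | ⟨n', hn, rfl⟩
    · exact .inr ⟨(n, m'), rfl, .inr ⟨.refl, hm⟩⟩
    · exact .inr ⟨(n', m), rfl, .inl ⟨hn, .refl⟩⟩

theorem sn_plug_case_of {α : Type} (w x y : α → Tm)
    (hroot : ∀ p σ τ s t δ r, Root (.case (w p) σ τ s t δ) r →
      r = s.subst 0 (x p) ∨ r = t.subst 0 (y p))
    (hstep : ∀ p u, Step (w p) u →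
      ∃ q, u = w q ∧ ReflTransGen Step (x p) (x q) ∧ ReflTransGen Step (y p) (y q))
    {p : α} {σ τ δ : Ty} {s t : Tm} {E : List Frame} (hw : SN (w p))
    (hs : SN (plug (s.subst 0 (x p)) E)) (ht : SN (plug (t.subst 0 (y p)) E)) :
    SN (plug (.case (w p) σ τ s t δ) E) := by
  suffices H : ∀ n Q, Acc (swap (TransGen Step)) Q → ∀ p σ τ s t δ E, E.length ≤ n →
      Q = .pair (.pair (plug (s.subst 0 (x p)) E) (plug (t.subst 0 (y p)) E)) (w p) →
      SN (plug (.case (w p) σ τ s t δ) E) from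
    H _ _ ((hs.pair ht).pair hw).acc_transGen p σ τ s t δ E le_rfl rfl
  intro n
  induction n using Nat.strong_induction_on with
  | _ n ihn =>
  intro Q hQ
  induction hQ with
  | intro Q hQ ihQ =>
  rintro p σ τ s t δ E hn rfl
  refine ⟨_, fun X hX => ?_⟩
  rcases step_plug_inv (E := .case σ τ s t δ :: E) hX with
    ⟨u, hu, rfl⟩ | ⟨E', hE', rfl⟩ | ⟨F, E₁, r, hFE, hr, rfl⟩
  · obtain ⟨q, rfl, hx, hy⟩ := hstep p u hu
    refine ihQ _ (Step.transGen_pair_right (Step.reflTransGen_pair ?_ ?_) hu)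
      q σ τ s t δ E hn rfl
    exacts [Step.reflTransGen_plug (Step.reflTransGen_subst_arg s hx 0) E,
      Step.reflTransGen_plug (Step.reflTransGen_subst_arg t hy 0) E]
  · rcases hE'.case_cons_inv with
      ⟨s', hs', rfl⟩ | ⟨t', ht', rfl⟩ | ⟨E₁, hE₁, rfl⟩ |
      ⟨F, E₁, s', t', δ', rfl, rfl, hsub⟩
    · exact ihQ _ (.single (.pairL (.pairL ((hs'.subst 0 _).plug E)))) p σ τ s' t δ E hn rfl
    · exact ihQ _ (.single (.pairL (.pairR ((ht'.subst 0 _).plug E)))) p σ τ s t' δ E hn rfl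
    · exact ihQ _ (.head (.pairL (.pairL (hE₁.plug _)))
          (.single (.pairL (.pairR (hE₁.plug _)))))
        p σ τ s t δ E₁ (hE₁.length_le.trans hn) rfl
    -- commuting the `case` frame with the next one keeps the measure but shortens the stack
    · refine ihn E₁.length (by simp at hn; omega) _ ⟨_, hQ⟩ p σ τ s' t' δ' E₁ le_rfl ?_
      simp only [(hsub _).1, (hsub _).2]
      rfl
  · obtain ⟨rfl, rfl⟩ := List.cons.inj hFE
    have hQ' := (SN.of_acc_transGen ⟨_, hQ⟩).of_pair_left
    rcases hroot p σ τ s t δ r hr with rfl | rfl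
    exacts [hQ'.of_pair_left, hQ'.of_pair_right]

theorem sn_plug_case_var {n : ℕ} {σ τ δ : Ty} {s t : Tm} {E : List Frame}
    (hs : SN (plug (s.subst 0 (.var 0)) E)) (ht : SN (plug (t.subst 0 (.var 0)) E)) :
    SN (plug (.case (.var n) σ τ s t δ) E) :=
  sn_plug_case_of (fun _ : Unit => .var n) (fun _ => .var 0) (fun _ => .var 0)
    (fun _ _ _ _ _ _ _ h => by rcases h with h | h <;> cases h)
    (fun _ _ h => h.var_inv.elim) (p := ()) (.var n) hs ht

theorem sn_plug_case_inl {σ τ δ : Ty} {a s t : Tm} {E : List Frame} (ha : SN a)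
    (hs : SN (plug (s.subst 0 a) E)) (ht : SN (plug (t.subst 0 (.var 0)) E)) :
    SN (plug (.case (.inl σ τ a) σ τ s t δ) E) :=
  sn_plug_case_of (.inl σ τ) id (fun _ => .var 0)
    (fun _ _ _ _ _ _ _ h => by rcases h with h | h <;> cases h; exact .inl rfl)
    (fun _ _ h => by obtain ⟨a', ha, rfl⟩ := h.inl_inv; exact ⟨a', rfl, .single ha, .refl⟩)
    ha.inl hs ht

theorem sn_plug_case_inr {σ τ δ : Ty} {b s t : Tm} {E : List Frame} (hb : SN b)
    (hs : SN (plug (s.subst 0 (.var 0)) E)) (ht : SN (plug (t.subst 0 b) E)) :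
    SN (plug (.case (.inr σ τ b) σ τ s t δ) E) :=
  sn_plug_case_of (.inr σ τ) (fun _ => .var 0) id
    (fun _ _ _ _ _ _ _ h => by rcases h with h | h <;> cases h; exact .inr rfl)
    (fun _ _ h => by obtain ⟨b', hb, rfl⟩ := h.inr_inv; exact ⟨b', rfl, .refl, .single hb⟩)
    hb.inr hs ht

/-! ## Reducibility -/

/-- The hypotheses `∀ E, RedStack σ E → SN (plug u E)` are `Red σ u`, unfolded. -/
def RedStack : Ty → List Frame → Prop
  | .base _, E | .bot, E => SNStack E
  | .arr σ τ, E => E = [] ∨ ∃ u E', E = .app u :: E' ∧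
      (∀ E'', RedStack σ E'' → SN (plug u E'')) ∧ RedStack τ E'
  | .and σ τ, E => E = [] ∨ (∃ E', E = .proj1 σ τ :: E' ∧ RedStack σ E') ∨
      ∃ E', E = .proj2 σ τ :: E' ∧ RedStack τ E'
  | .or σ τ, E => SNStack E ∧
      (∀ a, (∀ E', RedStack σ E' → SN (plug a E')) → SN (plug (.inl σ τ a) E)) ∧
      ∀ b, (∀ E', RedStack τ E' → SN (plug b E')) → SN (plug (.inr σ τ b) E)

def Red (ρ : Ty) (t : Tm) : Prop := ∀ E, RedStack ρ E → SN (plug t E)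

theorem redStack_nil_and_snStack : ∀ ρ, RedStack ρ [] ∧ ∀ E, RedStack ρ E → SNStack E
  | .base _ | .bot => ⟨.nil, fun _ h => h⟩
  | .arr σ τ => by
    refine ⟨.inl rfl, fun E h => ?_⟩
    rcases h with rfl | ⟨u, E', rfl, hu, hE'⟩
    · exact .nil
    · exact .cons_of_isApplicative trivial
        (Frame.acc_app (hu [] (redStack_nil_and_snStack σ).1))
        ((redStack_nil_and_snStack τ).2 _ hE')
  | .and σ τ => by
    refine ⟨.inl rfl, fun E h => ?_⟩
    rcases h with rfl | ⟨E', rfl, hE'⟩ | ⟨E', rfl, hE'⟩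
    · exact .nil
    · exact .cons_of_isApplicative trivial Frame.acc_proj1
        ((redStack_nil_and_snStack σ).2 _ hE')
    · exact .cons_of_isApplicative trivial Frame.acc_proj2
        ((redStack_nil_and_snStack τ).2 _ hE')
  | .or σ τ => ⟨⟨.nil, fun _ ha => (ha [] (redStack_nil_and_snStack σ).1).inl,
      fun _ hb => (hb [] (redStack_nil_and_snStack τ).1).inr⟩, fun _ h => h.1⟩

theorem RedStack.nil (ρ : Ty) : RedStack ρ [] := (redStack_nil_and_snStack ρ).1

theorem RedStack.snStack {ρ : Ty} {E : List Frame} (h : RedStack ρ E) : SNStack E :=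
  (redStack_nil_and_snStack ρ).2 E h

theorem Red.sn {ρ : Ty} {t : Tm} (h : Red ρ t) : SN t := h [] (.nil ρ)

theorem red_var (ρ : Ty) (n : ℕ) : Red ρ (.var n) := fun _ h => sn_plug_var_iff.mpr h.snStack

def RedEnv (Γ : List Ty) (e : ℕ → Tm) : Prop := ∀ n ρ, Γ[n]? = some ρ → Red ρ (e n)

theorem RedEnv.scons {Γ : List Ty} {e : ℕ → Tm} {σ : Ty} {a : Tm} (he : RedEnv Γ e)
    (ha : Red σ a) : RedEnv (σ :: Γ) (Tm.scons a e) := by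
  rintro (_ | n) ρ h
  · cases h
    exact ha
  · exact he n ρ h

theorem HasTy.red {Γ : List Ty} {M : Tm} {τ : Ty} (h : HasTy Γ M τ) {e : ℕ → Tm}
    (he : RedEnv Γ e) : Red τ (M.msubst e) := by
  induction h generalizing e with
  | var h => exact he _ _ h
  | @lam _ σ _ t _ ih =>
    rintro E (rfl | ⟨u, E, rfl, hu, hE⟩)
    · have h := (ih (he.scons (red_var σ 0))).sn
      rw [← Tm.msubst_up_subst_zero] at h
      exact (SN.of_subst h).lam
    · refine sn_plug_beta (Red.sn hu) ?_
      rw [Tm.msubst_up_subst_zero]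
      exact ih (he.scons hu) E hE
  | app _ _ ihs iht => exact fun E hE => ihs he _ (.inr ⟨_, E, rfl, iht he, hE⟩)
  | pair _ _ ihs iht =>
    rintro E (rfl | ⟨E, rfl, hE⟩ | ⟨E, rfl, hE⟩)
    · exact .pair (ihs he).sn (iht he).sn
    · exact sn_plug_proj1 (iht he).sn (ihs he E hE)
    · exact sn_plug_proj2 (ihs he).sn (iht he E hE)
  | inl _ ih => exact fun E hE => hE.2.1 _ (ih he)
  | inr _ ih => exact fun E hE => hE.2.2 _ (ih he)
  | proj1 _ ih => exact fun E hE => ih he _ (.inr (.inl ⟨E, rfl, hE⟩))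
  | proj2 _ ih => exact fun E hE => ih he _ (.inr (.inr ⟨E, rfl, hE⟩))
  | @case _ σ τ δ _ s t _ _ _ ihw ihs iht =>
    intro E hE
    have hs : ∀ a, Red σ a → SN (plug ((s.msubst (Tm.up e)).subst 0 a) E) := fun a ha => by
      rw [Tm.msubst_up_subst_zero]
      exact ihs (he.scons ha) E hE
    have ht : ∀ b, Red τ b → SN (plug ((t.msubst (Tm.up e)).subst 0 b) E) := fun b hb => by
      rw [Tm.msubst_up_subst_zero]
      exact iht (he.scons hb) E hE
    refine ihw he (.case σ τ _ _ δ :: E) ⟨?_, fun a ha => ?_, fun b hb => ?_⟩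
    · exact sn_plug_var_iff.mp
        (sn_plug_case_var (n := 0) (hs _ (red_var σ 0)) (ht _ (red_var τ 0)))
    · exact sn_plug_case_inl (Red.sn ha) (hs a ha) (ht _ (red_var τ 0))
    · exact sn_plug_case_inr (Red.sn hb) (hs _ (red_var σ 0)) (ht b hb)
  | eps _ ih => exact fun E hE => ih he _ (hE.snStack.eps_cons _)

theorem SN.not_exists_seq {t : Tm} (h : SN t) :
    ¬ ∃ f : ℕ → Tm, f 0 = t ∧ ∀ n, Step (f n) (f (n + 1)) := by
  induction h with
  | intro t _ ih =>
    rintro ⟨f, rfl, hf⟩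
    exact ih (f 1) (hf 0) ⟨fun n => f (n + 1), rfl, fun n => hf (n + 1)⟩

/-- Strong normalization of λ(→,∧,∨,⊥): no well-typed term admits an infinite
sequence of β- and commutative reductions. -/
theorem lambda_full_strongly_normalizing {Γ : List Ty} {M : Tm} {τ : Ty}
    (h : HasTy Γ M τ) :
    ¬ ∃ f : ℕ → Tm, f 0 = M ∧ ∀ n, Beta (f n) (f (n + 1)) ∨ Comm (f n) (f (n + 1)) := by
  have hM : SN M := by simpa using (h.red fun n ρ _ => red_var ρ n).sn
  simpa only [step_iff_beta_or_comm] using hM.not_exists_seq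
end

section
/- Every sequence of commutative (permutative) reductions in full system F terminates. -/
/-!
Write `χ(X E) = e(χ X)` for an eliminator `E`; every clause of `χ` for an eliminator has
`e x = x² c + k` with `c ≥ 1` and `k ≤ 1`. For such `e`, moving `E` inside a case or an
∃-elimination decreases `χ` because `e` is superadditive and `m e(p) + 1 < e(m p + 1)`, and
absorbing `E` into `ε` decreases `χ` because `x < e x` for `x ≥ 2`. As `χ` is strictly monotone
in each immediate subterm, every commutative step strictly decreases the natural number `χ`.
-/

/-! Types of full system F: type variables (de Bruijn), ⊥, →, ∧, ∨, ∀, ∃. -/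
inductive FTy : Type
  | tvar : ℕ → FTy
  | bot  : FTy
  | arr  : FTy → FTy → FTy
  | and  : FTy → FTy → FTy
  | or   : FTy → FTy → FTy
  | all  : FTy → FTy
  | ex   : FTy → FTy
  deriving DecidableEq

namespace FTy

/-- Shift the free type variables `≥ c` by `d`. -/
def shift (c d : ℕ) : FTy → FTy
  | tvar n => if n < c then tvar n else tvar (n + d)
  | bot => bot
  | arr a b => arr (shift c d a) (shift c d b)
  | and a b => and (shift c d a) (shift c d b)
  | or a b => or (shift c d a) (shift c d b)
  | all t => all (shift (c + 1) d t)
  | ex t => ex (shift (c + 1) d t)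

/-- Substitution of a type for type variable `n`. -/
def subst : FTy → ℕ → FTy → FTy
  | tvar m, n, s => if m = n then s else if n < m then tvar (m - 1) else tvar m
  | bot, _, _ => bot
  | arr a b, n, s => arr (subst a n s) (subst b n s)
  | and a b, n, s => and (subst a n s) (subst b n s)
  | or a b, n, s => or (subst a n s) (subst b n s)
  | all t, n, s => all (subst t (n + 1) (shift 0 1 s))
  | ex t, n, s => ex (subst t (n + 1) (shift 0 1 s))

end FTy

/-- The helper CPS type translation `τ*` (with `τ̄ = (τ*→⊥)→⊥` inlined). -/
def star : FTy → FTy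
  | .tvar n => .tvar n
  | .bot => .bot
  | .arr a b =>
      .arr (.arr (.arr (star a) .bot) .bot) (.arr (.arr (star b) .bot) .bot)
  | .and a b =>
      .arr (.arr (.arr (.arr (star a) .bot) .bot)
        (.arr (.arr (.arr (star b) .bot) .bot) .bot)) .bot
  | .or a b =>
      .arr (.arr (.arr (.arr (star a) .bot) .bot) .bot)
        (.arr (.arr (.arr (.arr (star b) .bot) .bot) .bot) .bot)
  | .all t => .all (.arr (.arr (star t) .bot) .bot)
  | .ex t => .arr (.all (.arr (.arr (.arr (star t) .bot) .bot) .bot)) .bot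

/-- The CPS type translation `τ̄ = (τ*→⊥)→⊥`. -/
def bar (t : FTy) : FTy := .arr (.arr (star t) .bot) .bot

/-- Church-style terms of full system F (de Bruijn for both term and type variables). -/
inductive FTm : Type
  | var     : ℕ → FTm
  | lam     : FTy → FTm → FTm
  | app     : FTm → FTm → FTm
  | pair    : FTm → FTm → FTm
  | inl     : FTy → FTy → FTm → FTm
  | inr     : FTy → FTy → FTm → FTm
  | proj1   : FTm → FTm
  | proj2   : FTm → FTm
  | case    : FTm → FTm → FTm → FTy → FTm   -- W[x.S, y.T]^δ
  | eps     : FTm → FTy → FTm               -- A^⊥ ε_σ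
  | tlam    : FTm → FTm                     -- Λp. M
  | tapp    : FTm → FTy → FTm               -- M σ
  | exintro : FTm → FTy → FTm               -- [M, σ]
  | exelim  : FTm → FTm → FTy → FTm         -- M [x.P]^δ  (binds a type and a term var in P)
  deriving DecidableEq

namespace FTm

/-- Shift free *term* variables `≥ c` by `d`. -/
def shiftTm (c d : ℕ) : FTm → FTm
  | var n => if n < c then var n else var (n + d)
  | lam σ t => lam σ (shiftTm (c + 1) d t)
  | app s t => app (shiftTm c d s) (shiftTm c d t)
  | pair s t => pair (shiftTm c d s) (shiftTm c d t)
  | inl σ τ t => inl σ τ (shiftTm c d t)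
  | inr σ τ t => inr σ τ (shiftTm c d t)
  | proj1 t => proj1 (shiftTm c d t)
  | proj2 t => proj2 (shiftTm c d t)
  | case w s t δ => case (shiftTm c d w) (shiftTm (c + 1) d s) (shiftTm (c + 1) d t) δ
  | eps t σ => eps (shiftTm c d t) σ
  | tlam t => tlam (shiftTm c d t)
  | tapp t σ => tapp (shiftTm c d t) σ
  | exintro t σ => exintro (shiftTm c d t) σ
  | exelim m p δ => exelim (shiftTm c d m) (shiftTm (c + 1) d p) δ

/-- Shift free *type* variables `≥ c` by `d` in a term. -/
def shiftTy (c d : ℕ) : FTm → FTm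
  | var n => var n
  | lam σ t => lam (σ.shift c d) (shiftTy c d t)
  | app s t => app (shiftTy c d s) (shiftTy c d t)
  | pair s t => pair (shiftTy c d s) (shiftTy c d t)
  | inl σ τ t => inl (σ.shift c d) (τ.shift c d) (shiftTy c d t)
  | inr σ τ t => inr (σ.shift c d) (τ.shift c d) (shiftTy c d t)
  | proj1 t => proj1 (shiftTy c d t)
  | proj2 t => proj2 (shiftTy c d t)
  | case w s t δ => case (shiftTy c d w) (shiftTy c d s) (shiftTy c d t) (δ.shift c d)
  | eps t σ => eps (shiftTy c d t) (σ.shift c d)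
  | tlam t => tlam (shiftTy (c + 1) d t)
  | tapp t σ => tapp (shiftTy c d t) (σ.shift c d)
  | exintro t σ => exintro (shiftTy c d t) (σ.shift c d)
  | exelim m p δ => exelim (shiftTy c d m) (shiftTy (c + 1) d p) (δ.shift c d)

/-- Substitute term `s` for term variable `n`. -/
def substTm : FTm → ℕ → FTm → FTm
  | var m, n, s => if m = n then s else if n < m then var (m - 1) else var m
  | lam σ t, n, s => lam σ (substTm t (n + 1) (shiftTm 0 1 s))
  | app a b, n, s => app (substTm a n s) (substTm b n s)
  | pair a b, n, s => pair (substTm a n s) (substTm b n s)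
  | inl σ τ t, n, s => inl σ τ (substTm t n s)
  | inr σ τ t, n, s => inr σ τ (substTm t n s)
  | proj1 t, n, s => proj1 (substTm t n s)
  | proj2 t, n, s => proj2 (substTm t n s)
  | case w a b δ, n, s =>
      case (substTm w n s) (substTm a (n + 1) (shiftTm 0 1 s)) (substTm b (n + 1) (shiftTm 0 1 s)) δ
  | eps t σ, n, s => eps (substTm t n s) σ
  | tlam t, n, s => tlam (substTm t n (shiftTy 0 1 s))
  | tapp t σ, n, s => tapp (substTm t n s) σ
  | exintro t σ, n, s => exintro (substTm t n s) σ
  | exelim m p δ, n, s =>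
      exelim (substTm m n s) (substTm p (n + 1) (shiftTy 0 1 (shiftTm 0 1 s))) δ

/-- Substitute type `ρ` for type variable `n` in a term. -/
def substTy : FTm → ℕ → FTy → FTm
  | var m, _, _ => var m
  | lam σ t, n, ρ => lam (σ.subst n ρ) (substTy t n ρ)
  | app a b, n, ρ => app (substTy a n ρ) (substTy b n ρ)
  | pair a b, n, ρ => pair (substTy a n ρ) (substTy b n ρ)
  | inl σ τ t, n, ρ => inl (σ.subst n ρ) (τ.subst n ρ) (substTy t n ρ)
  | inr σ τ t, n, ρ => inr (σ.subst n ρ) (τ.subst n ρ) (substTy t n ρ)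
  | proj1 t, n, ρ => proj1 (substTy t n ρ)
  | proj2 t, n, ρ => proj2 (substTy t n ρ)
  | case w a b δ, n, ρ => case (substTy w n ρ) (substTy a n ρ) (substTy b n ρ) (δ.subst n ρ)
  | eps t σ, n, ρ => eps (substTy t n ρ) (σ.subst n ρ)
  | tlam t, n, ρ => tlam (substTy t (n + 1) (ρ.shift 0 1))
  | tapp t σ, n, ρ => tapp (substTy t n ρ) (σ.subst n ρ)
  | exintro t σ, n, ρ => exintro (substTy t n ρ) (σ.subst n ρ)
  | exelim m p δ, n, ρ =>
      exelim (substTy m n ρ) (substTy p (n + 1) (ρ.shift 0 1)) (δ.subst n ρ)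

/-- Size of a term (invariant under shifting). -/
def size : FTm → ℕ
  | var _ => 1
  | lam _ t => size t + 1
  | app s t => size s + size t + 1
  | pair s t => size s + size t + 1
  | inl _ _ t => size t + 1
  | inr _ _ t => size t + 1
  | proj1 t => size t + 1
  | proj2 t => size t + 1
  | case w s t _ => size w + size s + size t + 1
  | eps t _ => size t + 1
  | tlam t => size t + 1
  | tapp t _ => size t + 1
  | exintro t _ => size t + 1
  | exelim m p _ => size m + size p + 1

@[simp] theorem size_shiftTm (c d : ℕ) (t : FTm) : (shiftTm c d t).size = t.size := by
  induction t generalizing c with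
  | var n => simp only [shiftTm]; split <;> rfl
  | _ => simp_all [shiftTm, size]

end FTm

/-- Typing judgment of full system F. -/
inductive HasTyF : List FTy → FTm → FTy → Prop
  | var {Γ n τ} : Γ[n]? = some τ → HasTyF Γ (.var n) τ
  | lam {Γ σ τ t} : HasTyF (σ :: Γ) t τ → HasTyF Γ (.lam σ t) (.arr σ τ)
  | app {Γ σ τ s t} : HasTyF Γ s (.arr σ τ) → HasTyF Γ t σ → HasTyF Γ (.app s t) τ
  | pair {Γ σ τ s t} : HasTyF Γ s σ → HasTyF Γ t τ → HasTyF Γ (.pair s t) (.and σ τ)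
  | inl {Γ σ τ t} : HasTyF Γ t σ → HasTyF Γ (.inl σ τ t) (.or σ τ)
  | inr {Γ σ τ t} : HasTyF Γ t τ → HasTyF Γ (.inr σ τ t) (.or σ τ)
  | proj1 {Γ σ τ t} : HasTyF Γ t (.and σ τ) → HasTyF Γ (.proj1 t) σ
  | proj2 {Γ σ τ t} : HasTyF Γ t (.and σ τ) → HasTyF Γ (.proj2 t) τ
  | case {Γ σ τ δ w s t} : HasTyF Γ w (.or σ τ) → HasTyF (σ :: Γ) s δ → HasTyF (τ :: Γ) t δ →
      HasTyF Γ (.case w s t δ) δ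
  | eps {Γ σ t} : HasTyF Γ t .bot → HasTyF Γ (.eps t σ) σ
  | tlam {Γ τ t} : HasTyF (Γ.map (FTy.shift 0 1)) t τ → HasTyF Γ (.tlam t) (.all τ)
  | tapp {Γ τ σ t} : HasTyF Γ t (.all τ) → HasTyF Γ (.tapp t σ) (τ.subst 0 σ)
  | exintro {Γ ρ σ t} : HasTyF Γ t (ρ.subst 0 σ) → HasTyF Γ (.exintro t σ) (.ex ρ)
  | exelim {Γ ρ δ m p} : HasTyF Γ m (.ex ρ) →
      HasTyF (ρ :: Γ.map (FTy.shift 0 1)) p (δ.shift 0 1) → HasTyF Γ (.exelim m p δ) δ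

/-- Compatible (congruence) closure of a root relation on terms of full system F. -/
inductive CompatF (R : FTm → FTm → Prop) : FTm → FTm → Prop
  | root {a b} : R a b → CompatF R a b
  | lam {σ a b} : CompatF R a b → CompatF R (.lam σ a) (.lam σ b)
  | appL {a b t} : CompatF R a b → CompatF R (.app a t) (.app b t)
  | appR {a b t} : CompatF R a b → CompatF R (.app t a) (.app t b)
  | pairL {a b t} : CompatF R a b → CompatF R (.pair a t) (.pair b t)
  | pairR {a b t} : CompatF R a b → CompatF R (.pair t a) (.pair t b)
  | inl {σ τ a b} : CompatF R a b → CompatF R (.inl σ τ a) (.inl σ τ b)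
  | inr {σ τ a b} : CompatF R a b → CompatF R (.inr σ τ a) (.inr σ τ b)
  | proj1 {a b} : CompatF R a b → CompatF R (.proj1 a) (.proj1 b)
  | proj2 {a b} : CompatF R a b → CompatF R (.proj2 a) (.proj2 b)
  | caseW {δ a b s t} : CompatF R a b → CompatF R (.case a s t δ) (.case b s t δ)
  | caseS {δ w a b t} : CompatF R a b → CompatF R (.case w a t δ) (.case w b t δ)
  | caseT {δ w s a b} : CompatF R a b → CompatF R (.case w s a δ) (.case w s b δ)
  | eps {σ a b} : CompatF R a b → CompatF R (.eps a σ) (.eps b σ)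
  | tlam {a b} : CompatF R a b → CompatF R (.tlam a) (.tlam b)
  | tapp {σ a b} : CompatF R a b → CompatF R (.tapp a σ) (.tapp b σ)
  | exintro {σ a b} : CompatF R a b → CompatF R (.exintro a σ) (.exintro b σ)
  | exelimM {δ a b p} : CompatF R a b → CompatF R (.exelim a p δ) (.exelim b p δ)
  | exelimP {δ m a b} : CompatF R a b → CompatF R (.exelim m a δ) (.exelim m b δ)

/-- Root β-reductions of full system F. -/
inductive FBetaRoot : FTm → FTm → Prop
  | beta {σ m a} : FBetaRoot (.app (.lam σ m) a) (m.substTm 0 a)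
  | pi1 {m n} : FBetaRoot (.proj1 (.pair m n)) m
  | pi2 {m n} : FBetaRoot (.proj2 (.pair m n)) n
  | inl {σ τ δ a s t} : FBetaRoot (.case (.inl σ τ a) s t δ) (s.substTm 0 a)
  | inr {σ τ δ b s t} : FBetaRoot (.case (.inr σ τ b) s t δ) (t.substTm 0 b)
  | exelim {δ σ m p} :
      FBetaRoot (.exelim (.exintro m σ) p δ) ((p.substTy 0 σ).substTm 0 m)
  | tbeta {m σ} : FBetaRoot (.tapp (.tlam m) σ) (m.substTy 0 σ)

/-- The 21 root commutative (permutative) reductions of full system F. -/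
inductive FCommRoot : FTm → FTm → Prop
  -- pattern (W[x.S,y.T])E ⇝ W[x.SE,y.TE]
  | caseApp {w α β s t n} :
      FCommRoot (.app (.case w s t (.arr α β)) n)
        (.case w (.app s (n.shiftTm 0 1)) (.app t (n.shiftTm 0 1)) β)
  | casePi1 {w α β s t} :
      FCommRoot (.proj1 (.case w s t (.and α β))) (.case w (.proj1 s) (.proj1 t) α)
  | casePi2 {w α β s t} :
      FCommRoot (.proj2 (.case w s t (.and α β))) (.case w (.proj2 s) (.proj2 t) β)
  | caseCase {w α β δ s t a b} :
      FCommRoot (.case (.case w s t (.or α β)) a b δ)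
        (.case w (.case s (a.shiftTm 1 1) (b.shiftTm 1 1) δ)
          (.case t (a.shiftTm 1 1) (b.shiftTm 1 1) δ) δ)
  | caseEps {w s t α} :
      FCommRoot (.eps (.case w s t .bot) α) (.case w (.eps s α) (.eps t α) α)
  | caseTapp {w α s t γ} :
      FCommRoot (.tapp (.case w s t (.all α)) γ)
        (.case w (.tapp s γ) (.tapp t γ) (α.subst 0 γ))
  | caseExelim {w α s t p ξ} :
      FCommRoot (.exelim (.case w s t (.ex α)) p ξ)
        (.case w (.exelim s (p.shiftTm 1 1) ξ) (.exelim t (p.shiftTm 1 1) ξ) ξ)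
  -- pattern (A ε)E ⇝ A ε
  | epsApp {a σ τ n} : FCommRoot (.app (.eps a (.arr σ τ)) n) (.eps a τ)
  | epsPi1 {a σ τ} : FCommRoot (.proj1 (.eps a (.and σ τ))) (.eps a σ)
  | epsPi2 {a σ τ} : FCommRoot (.proj2 (.eps a (.and σ τ))) (.eps a τ)
  | epsCase {a σ τ δ s t} : FCommRoot (.case (.eps a (.or σ τ)) s t δ) (.eps a δ)
  | epsEps {a σ} : FCommRoot (.eps (.eps a .bot) σ) (.eps a σ)
  | epsTapp {a α γ} : FCommRoot (.tapp (.eps a (.all α)) γ) (.eps a (α.subst 0 γ))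
  | epsExelim {a α p ξ} : FCommRoot (.exelim (.eps a (.ex α)) p ξ) (.eps a ξ)
  -- pattern (M[x.P])E ⇝ M[x.PE]
  | exelimApp {m p α β n} :
      FCommRoot (.app (.exelim m p (.arr α β)) n)
        (.exelim m (.app p ((n.shiftTm 0 1).shiftTy 0 1)) β)
  | exelimPi1 {m p α β} :
      FCommRoot (.proj1 (.exelim m p (.and α β))) (.exelim m (.proj1 p) α)
  | exelimPi2 {m p α β} :
      FCommRoot (.proj2 (.exelim m p (.and α β))) (.exelim m (.proj2 p) β)
  | exelimCase {m p α β a b ξ} :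
      FCommRoot (.case (.exelim m p (.or α β)) a b ξ)
        (.exelim m (.case p ((a.shiftTm 1 1).shiftTy 0 1) ((b.shiftTm 1 1).shiftTy 0 1)
          (ξ.shift 0 1)) ξ)
  | exelimEps {m p σ} :
      FCommRoot (.eps (.exelim m p .bot) σ) (.exelim m (.eps p (σ.shift 0 1)) σ)
  | exelimTapp {m p α γ} :
      FCommRoot (.tapp (.exelim m p (.all α)) γ)
        (.exelim m (.tapp p (γ.shift 0 1)) (α.subst 0 γ))
  | exelimExelim {m p α n ξ} :
      FCommRoot (.exelim (.exelim m p (.ex α)) n ξ)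
        (.exelim m (.exelim p ((n.shiftTm 1 1).shiftTy 1 1) (ξ.shift 0 1)) ξ)

/-- One β-reduction step anywhere in a term of full system F. -/
def FBeta : FTm → FTm → Prop := CompatF FBetaRoot

/-- One commutative (permutative) reduction step anywhere in a term of full system F. -/
def FComm : FTm → FTm → Prop := CompatF FCommRoot

/-- The measure χ on terms of full system F. -/
def chi : FTm → ℕ
  | .var _ => 1
  | .lam _ t => chi t
  | .app s t => chi s ^ 2 * chi t
  | .pair s t => chi s + chi t
  | .inl _ _ t => chi t
  | .inr _ _ t => chi t
  | .proj1 t => chi t ^ 2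
  | .proj2 t => chi t ^ 2
  | .case w s t _ => chi w ^ 2 * (chi s + chi t) + 1
  | .eps t _ => chi t ^ 2 + 1
  | .tlam t => chi t
  | .tapp t _ => chi t ^ 2
  | .exintro t _ => chi t
  | .exelim m p _ => chi m ^ 2 * chi p + 1

/-! ## The target calculus: system F with → and ∀ only -/

/-- (Curry-style) terms of the target system F (→, ∀). -/
inductive FTm1 : Type
  | var  : ℕ → FTm1
  | lam  : FTm1 → FTm1
  | app  : FTm1 → FTm1 → FTm1
  | tlam : FTm1 → FTm1
  | tapp : FTm1 → FTy → FTm1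
  deriving DecidableEq

namespace FTm1

/-- Shift free term variables `≥ c` by `d`. -/
def shiftTm (c d : ℕ) : FTm1 → FTm1
  | var n => if n < c then var n else var (n + d)
  | lam t => lam (shiftTm (c + 1) d t)
  | app s t => app (shiftTm c d s) (shiftTm c d t)
  | tlam t => tlam (shiftTm c d t)
  | tapp t σ => tapp (shiftTm c d t) σ

/-- Shift free type variables `≥ c` by `d`. -/
def shiftTy (c d : ℕ) : FTm1 → FTm1
  | var n => var n
  | lam t => lam (shiftTy c d t)
  | app s t => app (shiftTy c d s) (shiftTy c d t)
  | tlam t => tlam (shiftTy (c + 1) d t)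
  | tapp t σ => tapp (shiftTy c d t) (σ.shift c d)

/-- Substitute a term for term variable `n`. -/
def substTm : FTm1 → ℕ → FTm1 → FTm1
  | var m, n, s => if m = n then s else if n < m then var (m - 1) else var m
  | lam t, n, s => lam (substTm t (n + 1) (shiftTm 0 1 s))
  | app a b, n, s => app (substTm a n s) (substTm b n s)
  | tlam t, n, s => tlam (substTm t n (shiftTy 0 1 s))
  | tapp t σ, n, s => tapp (substTm t n s) σ

/-- Substitute a type for type variable `n`. -/
def substTy : FTm1 → ℕ → FTy → FTm1
  | var m, _, _ => var m
  | lam t, n, ρ => lam (substTy t n ρ)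
  | app a b, n, ρ => app (substTy a n ρ) (substTy b n ρ)
  | tlam t, n, ρ => tlam (substTy t (n + 1) (ρ.shift 0 1))
  | tapp t σ, n, ρ => tapp (substTy t n ρ) (σ.subst n ρ)

end FTm1

/-- Typing in the target system F (→, ∀ fragment). -/
inductive HasTyT : List FTy → FTm1 → FTy → Prop
  | var {Γ n τ} : Γ[n]? = some τ → HasTyT Γ (.var n) τ
  | lam {Γ σ τ t} : HasTyT (σ :: Γ) t τ → HasTyT Γ (.lam t) (.arr σ τ)
  | app {Γ σ τ s t} : HasTyT Γ s (.arr σ τ) → HasTyT Γ t σ → HasTyT Γ (.app s t) τ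
  | tlam {Γ τ t} : HasTyT (Γ.map (FTy.shift 0 1)) t τ → HasTyT Γ (.tlam t) (.all τ)
  | tapp {Γ τ σ t} : HasTyT Γ t (.all τ) → HasTyT Γ (.tapp t σ) (τ.subst 0 σ)

/-- One β-reduction step (term or type β) in the target system F. -/
inductive TStep : FTm1 → FTm1 → Prop
  | beta {t s} : TStep (.app (.lam t) s) (t.substTm 0 s)
  | tbeta {t σ} : TStep (.tapp (.tlam t) σ) (t.substTy 0 σ)
  | lam {a b} : TStep a b → TStep (.lam a) (.lam b)
  | appL {a b t} : TStep a b → TStep (.app a t) (.app b t)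
  | appR {a b t} : TStep a b → TStep (.app t a) (.app t b)
  | tlam {a b} : TStep a b → TStep (.tlam a) (.tlam b)
  | tapp {σ a b} : TStep a b → TStep (.tapp a σ) (.tapp b σ)

/-! ## The CPS translation -/

/-- The helper translation `M ⋄ K` of the call-by-name CPS translation.
The eliminator continuations `E @ K` are inlined (see `atK` below). -/
def dia : FTm → FTm1 → FTm1
  | .var n, K => .app (.var n) K
  | .lam _ t, K => .app K (.lam (.lam (dia (t.shiftTm 0 1) (.var 0))))
  | .app s t, K =>
      dia s (.lam (.app (.app (.var 0) (.lam (dia (t.shiftTm 0 2) (.var 0))))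
        (K.shiftTm 0 1)))
  | .pair s t, K =>
      .app K (.lam (.app (.app (.var 0) (.lam (dia (s.shiftTm 0 2) (.var 0))))
        (.lam (dia (t.shiftTm 0 2) (.var 0)))))
  | .inl _ _ t, K => .app K (.lam (.lam (.app (.var 1) (.lam (dia (t.shiftTm 0 3) (.var 0))))))
  | .inr _ _ t, K => .app K (.lam (.lam (.app (.var 0) (.lam (dia (t.shiftTm 0 3) (.var 0))))))
  | .proj1 t, K => dia t (.lam (.app (.var 0) (.lam (.lam (.app (.var 1) (K.shiftTm 0 3))))))
  | .proj2 t, K => dia t (.lam (.app (.var 0) (.lam (.lam (.app (.var 0) (K.shiftTm 0 3))))))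
  | .case w s t _, K =>
      dia w (.lam (.app (.app (.var 0) (.lam (dia (s.shiftTm 1 1) (K.shiftTm 0 2))))
        (.lam (dia (t.shiftTm 1 1) (K.shiftTm 0 2)))))
  | .eps t _, _ => dia t (.lam (.var 0))
  | .tlam t, K => .app K (.tlam (.lam (dia (t.shiftTm 0 1) (.var 0))))
  | .tapp t σ, K => dia t (.lam (.app (.tapp (.var 0) (bar σ)) (K.shiftTm 0 1)))
  | .exintro t σ, K =>
      .app K (.lam (.app (.tapp (.var 0) (bar σ)) (.lam (dia (t.shiftTm 0 2) (.var 0)))))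
  | .exelim m p _, K =>
      dia m (.lam (.app (.var 0)
        (.tlam (.lam (dia (p.shiftTm 1 1) ((K.shiftTy 0 1).shiftTm 0 2))))))
  termination_by t _ => t.size
  decreasing_by all_goals simp [FTm.size] <;> omega

/-- The CPS translation of a term: `M̄ = λk.(M ⋄ k)`. -/
def cps (t : FTm) : FTm1 := .lam (dia (t.shiftTm 0 1) (.var 0))

/-- Eliminators of full system F, as standalone syntax. -/
inductive Elim : Type
  | arg   : FTm → Elim                    -- · R
  | pi1   : Elim
  | pi2   : Elim
  | cases : FTm → FTm → Elim              -- · [x.S, y.T]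
  | tyArg : FTy → Elim                    -- · σ
  | exE   : FTm → Elim                    -- · [x.S]
  | epsE  : Elim                          -- · ε

/-- The helper translation `E @ K` on eliminators. -/
def atK : Elim → FTm1 → FTm1
  | .arg n, K =>
      .lam (.app (.app (.var 0) (.lam (dia (n.shiftTm 0 2) (.var 0)))) (K.shiftTm 0 1))
  | .pi1, K => .lam (.app (.var 0) (.lam (.lam (.app (.var 1) (K.shiftTm 0 3)))))
  | .pi2, K => .lam (.app (.var 0) (.lam (.lam (.app (.var 0) (K.shiftTm 0 3)))))
  | .cases s t, K =>
      .lam (.app (.app (.var 0) (.lam (dia (s.shiftTm 1 1) (K.shiftTm 0 2))))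
        (.lam (dia (t.shiftTm 1 1) (K.shiftTm 0 2))))
  | .tyArg σ, K => .lam (.app (.tapp (.var 0) (bar σ)) (K.shiftTm 0 1))
  | .exE p, K =>
      .lam (.app (.var 0) (.tlam (.lam (dia (p.shiftTm 1 1) ((K.shiftTy 0 1).shiftTm 0 2)))))
  | .epsE, _ => .lam (.var 0)

/-- Term substitution on eliminators. -/
def esubstTm : Elim → ℕ → FTm → Elim
  | .arg m, n, s => .arg (m.substTm n s)
  | .pi1, _, _ => .pi1
  | .pi2, _, _ => .pi2
  | .cases a b, n, s =>
      .cases (a.substTm (n + 1) (s.shiftTm 0 1)) (b.substTm (n + 1) (s.shiftTm 0 1))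
  | .tyArg σ, _, _ => .tyArg σ
  | .exE p, n, s => .exE (p.substTm (n + 1) ((s.shiftTm 0 1).shiftTy 0 1))
  | .epsE, _, _ => .epsE

/-- Type substitution on eliminators. -/
def esubstTy : Elim → ℕ → FTy → Elim
  | .arg m, n, ρ => .arg (m.substTy n ρ)
  | .pi1, _, _ => .pi1
  | .pi2, _, _ => .pi2
  | .cases a b, n, ρ => .cases (a.substTy n ρ) (b.substTy n ρ)
  | .tyArg σ, n, ρ => .tyArg (σ.subst n ρ)
  | .exE p, n, ρ => .exE (p.substTy (n + 1) (ρ.shift 0 1))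
  | .epsE, _, _ => .epsE

def IsElimMeasure (e : ℕ → ℕ) : Prop :=
  ∃ c k, 0 < c ∧ k ≤ 1 ∧ ∀ x, e x = x ^ 2 * c + k

theorem isElimMeasure_sq : IsElimMeasure (· ^ 2) :=
  ⟨1, 0, one_pos, zero_le_one, fun _ => by ring⟩

theorem isElimMeasure_sq_add_one : IsElimMeasure (· ^ 2 + 1) :=
  ⟨1, 1, one_pos, le_rfl, fun _ => by ring⟩

theorem isElimMeasure_sq_mul {c : ℕ} (hc : 0 < c) : IsElimMeasure (· ^ 2 * c) :=
  ⟨c, 0, hc, zero_le_one, fun _ => rfl⟩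

theorem isElimMeasure_sq_mul_add_one {c : ℕ} (hc : 0 < c) : IsElimMeasure (· ^ 2 * c + 1) :=
  ⟨c, 1, hc, le_rfl, fun _ => rfl⟩

namespace IsElimMeasure

variable {e : ℕ → ℕ}

theorem lt_apply (he : IsElimMeasure e) {x : ℕ} (hx : 1 < x) : x < e x := by
  obtain ⟨c, k, hc, -, he⟩ := he
  rw [he]
  nlinarith

theorem apply_add_apply_le (he : IsElimMeasure e) {s t : ℕ} (hs : 0 < s) (ht : 0 < t) :
    e s + e t ≤ e (s + t) := by
  obtain ⟨c, k, hc, hk, he⟩ := he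
  rw [he, he, he]
  nlinarith [Nat.mul_le_mul hs ht]

theorem mul_apply_add_one_lt (he : IsElimMeasure e) {m p : ℕ} (hm : 0 < m) (hp : 0 < p) :
    m * e p + 1 < e (m * p + 1) := by
  obtain ⟨c, k, hc, hk, he⟩ := he
  rw [he, he]
  have hmpc : 0 < m * p * c := by positivity
  have hsq : m * (p ^ 2 * c) ≤ (m * p) ^ 2 * c :=
    calc m * (p ^ 2 * c) ≤ m * m * (p ^ 2 * c) := by gcongr; exact Nat.le_mul_self m
      _ = (m * p) ^ 2 * c := by ring
  have hk' : m * k ≤ m * p * c := by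
    rw [mul_assoc]; gcongr; exact hk.trans (Nat.mul_pos hp hc)
  nlinarith

theorem mul_apply_add_apply_add_one_lt (he : IsElimMeasure e) {m s t : ℕ} (hm : 0 < m)
    (hs : 0 < s) (ht : 0 < t) : m * (e s + e t) + 1 < e (m * (s + t) + 1) :=
  calc m * (e s + e t) + 1 ≤ m * e (s + t) + 1 := by gcongr; exact he.apply_add_apply_le hs ht
    _ < e (m * (s + t) + 1) := he.mul_apply_add_one_lt hm (by omega)

end IsElimMeasure

theorem chi_pos (t : FTm) : 0 < chi t := by
  induction t <;> simp only [chi] <;> positivity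

@[simp] theorem chi_shiftTm (c d : ℕ) (t : FTm) : chi (t.shiftTm c d) = chi t := by
  induction t generalizing c with
  | var n => simp only [FTm.shiftTm]; split <;> rfl
  | _ => simp_all [FTm.shiftTm, chi]

@[simp] theorem chi_shiftTy (c d : ℕ) (t : FTm) : chi (t.shiftTy c d) = chi t := by
  induction t generalizing c with
  | var n => rfl
  | _ => simp_all [FTm.shiftTy, chi]

theorem chi_lt_of_fCommRoot {a b : FTm} (h : FCommRoot a b) : chi b < chi a := by
  cases h <;> simp only [chi, chi_shiftTm, chi_shiftTy]
  case' caseApp =>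
    refine (isElimMeasure_sq_mul ?_).mul_apply_add_apply_add_one_lt ?_ ?_ ?_
  case' casePi1 | casePi2 | caseTapp =>
    refine isElimMeasure_sq.mul_apply_add_apply_add_one_lt ?_ ?_ ?_
  case' caseCase | caseExelim =>
    refine (isElimMeasure_sq_mul_add_one ?_).mul_apply_add_apply_add_one_lt ?_ ?_ ?_
  case' caseEps => refine isElimMeasure_sq_add_one.mul_apply_add_apply_add_one_lt ?_ ?_ ?_
  case' epsApp => refine (isElimMeasure_sq_mul ?_).lt_apply ?_
  case' epsPi1 | epsPi2 | epsTapp => refine isElimMeasure_sq.lt_apply ?_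
  case' epsCase | epsExelim => refine (isElimMeasure_sq_mul_add_one ?_).lt_apply ?_
  case' epsEps => refine isElimMeasure_sq_add_one.lt_apply ?_
  case' exelimApp => refine (isElimMeasure_sq_mul ?_).mul_apply_add_one_lt ?_ ?_
  case' exelimPi1 | exelimPi2 | exelimTapp => refine isElimMeasure_sq.mul_apply_add_one_lt ?_ ?_
  case' exelimCase | exelimExelim =>
    refine (isElimMeasure_sq_mul_add_one ?_).mul_apply_add_one_lt ?_ ?_
  case' exelimEps => refine isElimMeasure_sq_add_one.mul_apply_add_one_lt ?_ ?_
  all_goals simp [chi_pos]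

theorem chi_lt_of_compatF {R : FTm → FTm → Prop} (hR : ∀ {a b}, R a b → chi b < chi a)
    {a b : FTm} (h : CompatF R a b) : chi b < chi a := by
  induction h with
  | root h => exact hR h
  | _ => simp only [chi]; gcongr <;> simp [chi_pos]

theorem wellFounded_flip_fComm : WellFounded (flip FComm) :=
  Subrelation.wf (chi_lt_of_compatF chi_lt_of_fCommRoot) (InvImage.wf chi wellFounded_lt)

/-- Every sequence of commutative (permutative) reductions in full system F terminates. -/
theorem comm_terminating :
    ¬ ∃ f : ℕ → FTm, ∀ n, FComm (f n) (f (n + 1)) := by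
  rintro ⟨f, hf⟩
  exact (wellFounded_iff_isEmpty_descending_chain.1 wellFounded_flip_fComm).elim ⟨f, hf⟩
end

section
/- For natural numbers w, s, t, a, b with w ≥ 1, s ≥ 1, t ≥ 1, a ≥ 1, b ≥ 1, the inequality (w²(s+t)+1)²(a+b)+1 > w²((s²(a+b)+1)+(t²(a+b)+1))+1 holds. -/
theorem chi_decrease_case_case (w s t a b : ℕ) (hw : 1 ≤ w) (hs : 1 ≤ s)
    (ht : 1 ≤ t) (ha : 1 ≤ a) (hb : 1 ≤ b) :
    (w ^ 2 * (s + t) + 1) ^ 2 * (a + b) + 1 >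
      w ^ 2 * ((s ^ 2 * (a + b) + 1) + (t ^ 2 * (a + b) + 1)) + 1 := by
  have h1 : 1 ≤ w ^ 2 := Nat.one_le_pow _ _ hw
  have hst : 2 ≤ s + t := Nat.add_le_add hs ht
  have hab : 2 ≤ a + b := Nat.add_le_add ha hb
  have hsq : s ^ 2 + t ^ 2 ≤ (s + t) ^ 2 := by ring_nf; nlinarith
  have key : w ^ 2 * (s ^ 2 + t ^ 2) * (a + b) ≤ w ^ 2 * w ^ 2 * (s + t) ^ 2 * (a + b) :=
    Nat.mul_le_mul (Nat.mul_le_mul (Nat.le_mul_of_pos_left _ h1) hsq) (le_refl _)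
  have key2 : 2 * (2 * 2) * w ^ 2 ≤ (s + t) * ((a + b) * 2) * w ^ 2 :=
    Nat.mul_le_mul (Nat.mul_le_mul hst (Nat.mul_le_mul hab (le_refl 2))) (le_refl _)
  nlinarith [key, key2]
end

section
/- Under the translation ⌈·⌉ from λ(→,∧,∨,⊥) to λ→, the β-redex ⟨M,N⟩π₁ of type σ (with ⌈σ⌉ = σ₁→…→σₙ→⊥) satisfies: ⌈⟨M,N⟩π₁⌉ βη-reduces in one or more steps to ⌈M⌉. -/
/-! The projection `⌈P π₁⌉ = λa₁…aₙ. ⌈P⌉ (λx λy. x a₁…aₙ)` applied to the Church pair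
`⌈⟨M,N⟩⌉ = λz. z ⌈M⌉ ⌈N⌉` first feeds the continuation to the pair, then selects `⌈M⌉`
by two β-steps, leaving the η-expansion `λa₁…aₙ. ⌈M⌉ a₁…aₙ`, which n η-steps contract to `⌈M⌉`. -/

namespace Tm1

theorem shift_zero (t : Tm1) (c : ℕ) : shift c 0 t = t := by
  induction t generalizing c with
  | var n => simp [shift]
  | lam t ih => simp [shift, ih]
  | app a b iha ihb => simp [shift, iha, ihb]

theorem shift_shift (t : Tm1) {c c' : ℕ} (d e : ℕ) (h₁ : c ≤ c') (h₂ : c' ≤ c + e) :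
    shift c' d (shift c e t) = shift c (e + d) t := by
  induction t generalizing c c' with
  | var n =>
    by_cases h : n < c
    · simp [shift, h, lt_of_lt_of_le h h₁]
    · simp only [shift, if_neg h, if_neg (show ¬n + e < c' by omega)]
      congr 1; omega
  | lam t ih => simp only [shift, ih (c := c + 1) (c' := c' + 1) (by omega) (by omega)]
  | app a b iha ihb => simp only [shift, iha h₁ h₂, ihb h₁ h₂]

theorem subst_shift_succ (t s : Tm1) (c d : ℕ) :
    (shift c (d + 1) t).subst c s = shift c d t := by
  induction t generalizing c s with
  | var n =>
    by_cases h : n < c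
    · simp [shift, subst, h, h.ne, Nat.lt_asymm h]
    · simp only [shift, if_neg h, subst, if_neg (show n + (d + 1) ≠ c by omega),
        if_pos (show c < n + (d + 1) by omega)]
      rfl
  | lam t ih => simp only [shift, subst, ih]
  | app a b iha ihb => simp only [shift, subst, iha, ihb]

theorem subst_shift_self (t s : Tm1) : (shift 0 1 t).subst 0 s = t := by
  rw [subst_shift_succ, shift_zero]

end Tm1

theorem shift_mkApps (c d : ℕ) (f : Tm1) (l : List Tm1) :
    (mkApps f l).shift c d = mkApps (f.shift c d) (l.map (Tm1.shift c d)) := by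
  induction l generalizing f with
  | nil => rfl
  | cons x l ih => exact ih (f.app x)

theorem subst_mkApps (n : ℕ) (s f : Tm1) (l : List Tm1) :
    (mkApps f l).subst n s = mkApps (f.subst n s) (l.map (Tm1.subst · n s)) := by
  induction l generalizing f with
  | nil => rfl
  | cons x l ih => exact ih (f.app x)

theorem mkApps_concat (f x : Tm1) (l : List Tm1) :
    mkApps f (l ++ [x]) = .app (mkApps f l) x := by
  simp [mkApps]

theorem absN_succ' (n : ℕ) (t : Tm1) : absN (n + 1) t = absN n (.lam t) := by
  induction n with
  | zero => rfl
  | succ n ih => exact congrArg Tm1.lam ih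

/-- `descVars n k = [var (k+n-1), …, var (k+1), var k]`. -/
def descVars (n k : ℕ) : List Tm1 :=
  (List.range n).map fun i => .var (n - 1 - i + k)

theorem descVars_succ (n k : ℕ) : descVars (n + 1) k = descVars n (k + 1) ++ [.var k] := by
  simp only [descVars, List.range_succ, List.map_append, List.map_cons, List.map_nil,
    Nat.add_sub_cancel, Nat.sub_self, Nat.zero_add]
  congr 1
  refine List.map_congr_left fun i hi => ?_
  rw [List.mem_range] at hi
  congr 1; omega

theorem map_shift_descVars {c k : ℕ} (d n : ℕ) (h : c ≤ k) :
    (descVars n k).map (Tm1.shift c d) = descVars n (k + d) := by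
  simp only [descVars, List.map_map]
  refine List.map_congr_left fun i _ => ?_
  simp only [Function.comp, Tm1.shift, if_neg (show ¬n - 1 - i + k < c by omega)]
  congr 1; omega

theorem map_subst_descVars {j k : ℕ} (n : ℕ) (s : Tm1) (h : j < k) :
    (descVars n k).map (Tm1.subst · j s) = descVars n (k - 1) := by
  simp only [descVars, List.map_map]
  refine List.map_congr_left fun i _ => ?_
  simp only [Function.comp, Tm1.subst, if_neg (show n - 1 - i + k ≠ j by omega),
    if_pos (show j < n - 1 - i + k by omega)]
  congr 1; omega

def churchPair (A B : Tm1) : Tm1 :=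
  .lam (.app (.app (.var 0) (A.shift 0 1)) (B.shift 0 1))

/-- `λx λy. x a₁ … aₙ`, where `a₁ … aₙ` are the `n` enclosing binders. -/
def proj1Cont (n : ℕ) : Tm1 :=
  .lam (.lam (mkApps (.var 1) (descVars n 2)))

theorem trTm_pair (M N : Tm) : trTm (.pair M N) = churchPair (trTm M) (trTm N) := rfl

theorem churchPair_shift (A B : Tm1) (d : ℕ) :
    (churchPair A B).shift 0 d = churchPair (A.shift 0 d) (B.shift 0 d) := by
  have hswap : ∀ t : Tm1, (t.shift 0 1).shift 1 d = (t.shift 0 d).shift 0 1 := fun t => by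
    rw [Tm1.shift_shift t (c := 0) d 1 (Nat.zero_le _) le_rfl,
      Tm1.shift_shift t (c := 0) 1 d le_rfl (Nat.zero_le _), add_comm]
  simp [churchPair, Tm1.shift, hswap]

theorem trTm_proj1 (P : Tm) (σ τ : Ty) :
    trTm (.proj1 P σ τ) =
      absN (args (trTy σ)).length (.app ((trTm P).shift 0 (args (trTy σ)).length)
        (proj1Cont (args (trTy σ)).length)) := by
  have hvars : ∀ n, ((List.range n).map fun i => Tm1.var (n + 1 - i)) = descVars n 2 :=
    fun n => List.map_congr_left fun i hi => by
      rw [List.mem_range] at hi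
      congr 1; omega
  simp only [trTm, proj1Cont, hvars]

namespace Step1

theorem absN {a b : Tm1} (n : ℕ) (h : Step1 a b) : Step1 (absN n a) (absN n b) := by
  induction n with
  | zero => exact h
  | succ n ih => exact Step1.lam ih

theorem churchPair_app (A B K : Tm1) :
    Step1 (.app (churchPair A B) K) (.app (.app K A) B) := by
  have h := @Step1.beta (.app (.app (.var 0) (A.shift 0 1)) (B.shift 0 1)) K
  simpa [churchPair, Tm1.subst, Tm1.subst_shift_self] using h

theorem proj1Cont_app_app (n : ℕ) (A B : Tm1) :
    Relation.TransGen Step1 (.app (.app (proj1Cont n) A) B) (mkApps A (descVars n 0)) := by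
  have hA : Step1 (.app (proj1Cont n) A) (.lam (mkApps (A.shift 0 1) (descVars n 1))) := by
    have h := @Step1.beta (.lam (mkApps (.var 1) (descVars n 2))) A
    simpa [proj1Cont, Tm1.subst, subst_mkApps, map_subst_descVars] using h
  have hB : Step1 (.app (.lam (mkApps (A.shift 0 1) (descVars n 1))) B)
      (mkApps A (descVars n 0)) := by
    have h := @Step1.beta (mkApps (A.shift 0 1) (descVars n 1)) B
    rwa [subst_mkApps, Tm1.subst_shift_self, map_subst_descVars n B zero_lt_one] at h
  exact .tail (.single (.appL hA)) hB

theorem absN_mkApps_descVars (n : ℕ) (A : Tm1) :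
    Relation.ReflTransGen Step1 (_root_.absN n (mkApps (A.shift 0 n) (descVars n 0))) A := by
  induction n with
  | zero => simpa [_root_.absN, descVars, mkApps, Tm1.shift_zero] using .refl
  | succ n ih =>
    have hbody : mkApps (A.shift 0 (n + 1)) (descVars (n + 1) 0) =
        .app ((mkApps (A.shift 0 n) (descVars n 0)).shift 0 1) (.var 0) := by
      rw [descVars_succ, mkApps_concat, shift_mkApps, map_shift_descVars 1 n le_rfl,
        Tm1.shift_shift A 1 n le_rfl (Nat.zero_le _)]
    rw [hbody, absN_succ']
    exact .head (Step1.absN n eta) ih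

theorem absN_churchPair_proj1Cont (n : ℕ) (A B : Tm1) :
    Relation.TransGen Step1
      (_root_.absN n (.app ((churchPair A B).shift 0 n) (proj1Cont n))) A := by
  rw [churchPair_shift]
  have hproj : Relation.TransGen Step1
      (_root_.absN n (.app (.app (proj1Cont n) (A.shift 0 n)) (B.shift 0 n)))
      (_root_.absN n (mkApps (A.shift 0 n) (descVars n 0))) :=
    Relation.TransGen.lift (_root_.absN n) (fun _ _ => Step1.absN n) _ _ (proj1Cont_app_app n _ _)
  exact .head (Step1.absN n (churchPair_app _ _ _))
    (hproj.trans_left (absN_mkApps_descVars n A))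

end Step1

theorem trTm_pair_proj1_general {M N : Tm} {σ τ : Ty} :
    Relation.TransGen Step1 (trTm (.proj1 (.pair M N) σ τ)) (trTm M) := by
  rw [trTm_proj1, trTm_pair]
  exact Step1.absN_churchPair_proj1Cont _ (trTm M) (trTm N)

/-- Under the translation, the β-redex `⟨M,N⟩π₁` of type `σ` βη-reduces
(in one or more steps) to `⌈M⌉`. -/
theorem trTm_pair_proj1 {Γ : List Ty} {M N : Tm} {σ τ : Ty}
    (hM : HasTy Γ M σ) (hN : HasTy Γ N τ) :
    Relation.TransGen Step1 (trTm (.proj1 (.pair M N) σ τ)) (trTm M) :=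
  trTm_pair_proj1_general
end
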